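/- arXiv:2507.03554 — 3 statements merged into one kernel-verified Lean document; each statement's English description precedes it below -/
import Mathlib

section
/- Let θ be irrational with 1 < θ < 2, and suppose that the convergents p_k/q_k of θ satisfy q_k·|q_kθ − p_k| > 3·q_{k+1}·|q_{k+1}θ − p_{k+1}| for all sufficiently large k. Then every relative minimum z of the lattice Λ_θ with |z| sufficiently large is also a hyperbolic minimum of Λ_θ. -/
open Filter GenContFract

/-- sup-norm of a point of `ℝ²`. -/
noncomputable def latNorm (z : ℝ × ℝ) : ℝ := max |z.1| |z.2|

/-- `Π(z) = (|z₁|·|z₂|)^(1/2)`. -/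
noncomputable def latProd (z : ℝ × ℝ) : ℝ := (|z.1| * |z.2|) ^ ((1 : ℝ) / 2)

/-- The lattice `Λ_θ = {(θq − p, q + θp) : (q, p) ∈ ℤ²}`. -/
def latticeOf (θ : ℝ) : Set (ℝ × ℝ) :=
  {z | ∃ q p : ℤ, z = (θ * (q : ℝ) - (p : ℝ), (q : ℝ) + θ * (p : ℝ))}

/-- The weak uniform Diophantine exponent of a lattice `Λ ⊆ ℝ²`:
the supremum (in `EReal`) of real `γ` such that for every sufficiently large `t`
there is a nonzero `z ∈ Λ` with `|z| ≤ t` and `Π(z) ≤ t^(−γ)`. -/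
noncomputable def weakUniformExpLat (Λ : Set (ℝ × ℝ)) : EReal :=
  sSup {g : EReal | ∃ γ : ℝ, g = (γ : EReal) ∧
    ∀ᶠ t : ℝ in atTop, ∃ z ∈ Λ, z ≠ 0 ∧ latNorm z ≤ t ∧ latProd z ≤ t ^ (-γ)}

/-- `z` is a relative minimum of `Λ ⊆ ℝ²`. -/
def IsRelativeMin (Λ : Set (ℝ × ℝ)) (z : ℝ × ℝ) : Prop :=
  z ∈ Λ ∧ z ≠ 0 ∧
    ¬ ∃ w ∈ Λ, w ≠ 0 ∧ |w.1| ≤ |z.1| ∧ |w.2| ≤ |z.2| ∧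
      |w.1| + |w.2| < |z.1| + |z.2|

/-- `z` is a hyperbolic minimum of `Λ ⊆ ℝ²`. -/
def IsHyperbolicMin (Λ : Set (ℝ × ℝ)) (z : ℝ × ℝ) : Prop :=
  z ∈ Λ ∧ z ≠ 0 ∧
    ¬ ∃ w ∈ Λ, w ≠ 0 ∧ latNorm w ≤ latNorm z ∧ latProd w < latProd z

variable {θ : ℝ}

noncomputable def cfB (θ : ℝ) (n : ℕ) : ℝ := (GenContFract.of θ).dens n
noncomputable def cfA (θ : ℝ) (n : ℕ) : ℝ := (GenContFract.of θ).nums n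
noncomputable def cfE (θ : ℝ) (n : ℕ) : ℝ := θ * cfB θ n - cfA θ n
noncomputable def cfD (θ : ℝ) (n : ℕ) : ℝ := |cfE θ n|
noncomputable def cfZ (θ : ℝ) (n : ℕ) : ℝ := cfB θ n + θ * cfA θ n

lemma not_term (hθ : Irrational θ) (n : ℕ) : ¬(GenContFract.of θ).TerminatedAt n := by
  intro h
  have hterm : (GenContFract.of θ).Terminates := ⟨n, h⟩
  obtain ⟨q, hq⟩ := (GenContFract.terminates_iff_rat θ).mp hterm
  exact hθ ⟨q, hq.symm⟩

lemma stream_some (hθ : Irrational θ) (n : ℕ) :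
    ∃ ifp, IntFractPair.stream θ n = some ifp ∧ 0 < ifp.fr ∧ ifp.fr < 1 := by
  have hne : IntFractPair.stream θ n ≠ none := by
    cases n with
    | zero => simp [IntFractPair.stream_zero]
    | succ m =>
        intro h
        exact not_term hθ m
          (of_terminatedAt_n_iff_succ_nth_intFractPair_stream_eq_none.mpr h)
  obtain ⟨ifp, hifp⟩ := Option.ne_none_iff_exists'.mp hne
  refine ⟨ifp, hifp, ?_, IntFractPair.nth_stream_fr_lt_one hifp⟩
  rcases lt_or_eq_of_le (IntFractPair.nth_stream_fr_nonneg hifp) with h | h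
  · exact h
  · exfalso
    apply not_term hθ n
    exact of_terminatedAt_n_iff_succ_nth_intFractPair_stream_eq_none.mpr
      (IntFractPair.stream_eq_none_of_fr_eq_zero hifp h.symm)

lemma B_one_le (hθ : Irrational θ) (n : ℕ) : 1 ≤ cfB θ n := by
  have := succ_nth_fib_le_of_nth_den (v := θ) (n := n) (Or.inr (not_term hθ _))
  have h1 : (1 : ℝ) ≤ (Nat.fib (n+1) : ℝ) := by
    exact_mod_cast Nat.fib_pos.mpr n.succ_pos
  exact h1.trans this

lemma B_zero : cfB θ 0 = 1 := zeroth_den_eq_one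

lemma s_some (hθ : Irrational θ) (n : ℕ) :
    ∃ b : ℤ, (1:ℝ) ≤ b ∧ (GenContFract.of θ).s.get? n = some ⟨1, (b:ℝ)⟩ := by
  obtain ⟨gp, hgp⟩ := Option.ne_none_iff_exists'.mp (not_term hθ n)
  obtain ⟨ha, b, hb⟩ := of_partNum_eq_one_and_exists_int_partDen_eq hgp
  have hb1 : (1:ℝ) ≤ gp.b := of_one_le_get?_partDen (partDen_eq_s_b hgp)
  refine ⟨b, by rw [← hb]; exact hb1, ?_⟩
  rw [hgp]; congr 1
  cases gp; simp_all

lemma B_rec (hθ : Irrational θ) (n : ℕ) :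
    ∃ b : ℤ, (1:ℝ) ≤ b ∧ cfB θ (n+2) = b * cfB θ (n+1) + cfB θ n ∧
      cfA θ (n+2) = b * cfA θ (n+1) + cfA θ n := by
  obtain ⟨b, hb1, hs⟩ := s_some hθ (n+1)
  exact ⟨b, hb1, by
    simpa [cfB] using dens_recurrence hs rfl rfl, by
    simpa [cfA] using nums_recurrence hs rfl rfl⟩

lemma eps_spec (hθ : Irrational θ) (n : ℕ) :
    cfE θ n = (-1)^n * cfD θ n ∧ 0 < cfD θ n ∧ cfB θ n * cfD θ n < 1 := by
  obtain ⟨ifp, hifp, hfr0, hfr1⟩ := stream_some hθ n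
  have hsub := sub_convs_eq hifp
  simp only [if_neg hfr0.ne'] at hsub
  set g := GenContFract.of θ
  set Bv := (g.contsAux (n+1)).b with hBv
  set pB := (g.contsAux n).b with hpB
  have hBd : cfB θ n = Bv := by
    rw [cfB, den_eq_conts_b, nth_cont_eq_succ_nth_contAux]
  have hB1 : 1 ≤ cfB θ n := B_one_le hθ n
  have hBpos : 0 < Bv := by rw [← hBd]; linarith
  have hpB0 : 0 ≤ pB := zero_le_of_contsAux_b
  have hfri : 1 < ifp.fr⁻¹ := one_lt_inv_iff₀.mpr ⟨hfr0, hfr1⟩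
  have hden : 0 < ifp.fr⁻¹ * Bv + pB := by nlinarith
  have hconv : g.convs n = cfA θ n / cfB θ n := conv_eq_num_div_den
  have hEeq : cfE θ n = (-1)^n * (1 / (ifp.fr⁻¹ * Bv + pB)) := by
    have : θ - cfA θ n / cfB θ n = (-1)^n / (Bv * (ifp.fr⁻¹ * Bv + pB)) := by
      rw [← hconv]; exact hsub
    have hBne : cfB θ n ≠ 0 := by linarith
    rw [cfE]
    field_simp at this ⊢
    rw [hBd] at *
    nlinarith [this]
  set r := 1 / (ifp.fr⁻¹ * Bv + pB) with hr
  have hrpos : 0 < r := by positivity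
  have hDr : cfD θ n = r := by
    rw [cfD, hEeq, abs_mul, abs_pow, abs_neg, abs_one, one_pow, one_mul, abs_of_pos hrpos]
  refine ⟨by rw [hDr, hEeq], by rw [hDr]; exact hrpos, ?_⟩
  rw [hDr, hBd, hr, mul_one_div, div_lt_one hden]
  nlinarith

lemma D_lt_one (hθ : Irrational θ) (n : ℕ) : cfD θ n < 1 := by
  obtain ⟨_, hD, hu⟩ := eps_spec hθ n
  nlinarith [B_one_le hθ n]

lemma AB_int (hθ : Irrational θ) (h1 : 1 < θ) (h2 : θ < 2) (n : ℕ) :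
    ∃ a b : ℤ, cfA θ n = (a:ℝ) ∧ cfB θ n = (b:ℝ) := by
  induction n using Nat.strong_induction_on with
  | _ n ih =>
    match n with
    | 0 =>
        refine ⟨1, 1, ?_, by simpa using B_zero⟩
        have : cfA θ 0 = ((⌊θ⌋ : ℤ) : ℝ) := by
          rw [cfA, zeroth_num_eq_h, of_h_eq_floor]
        rw [this]
        norm_cast
        rw [Int.floor_eq_iff]
        constructor
        · push_cast; linarith
        · push_cast; linarith
    | 1 =>
        obtain ⟨b, hb1, hs⟩ := s_some hθ 0
        refine ⟨b * ⌊θ⌋ + 1, b, ?_, ?_⟩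
        · have := first_num_eq hs
          rw [cfA, this, of_h_eq_floor]
          push_cast; ring
        · have := first_den_eq hs
          rw [cfB, this]
    | (m+2) =>
        obtain ⟨c, _, hB, hA⟩ := B_rec hθ m
        obtain ⟨a0, b0, ha0, hb0⟩ := ih m (by omega)
        obtain ⟨a1, b1, ha1, hb1⟩ := ih (m+1) (by omega)
        exact ⟨c * a1 + a0, c * b1 + b0, by rw [hA, ha0, ha1]; push_cast; ring,
          by rw [hB, hb0, hb1]; push_cast; ring⟩

lemma A_one_le (hθ : Irrational θ) (h1 : 1 < θ) (h2 : θ < 2) (n : ℕ) : 1 ≤ cfA θ n := by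
  obtain ⟨a, b, ha, hb⟩ := AB_int hθ h1 h2 n
  have hB1 := B_one_le hθ n
  have hD1 := D_lt_one hθ n
  have hE : |cfE θ n| < 1 := hD1
  have h0 : (0:ℝ) < cfA θ n := by
    rw [abs_lt] at hE
    rw [cfE] at hE
    nlinarith [hE.1, hE.2]
  rw [ha] at h0 ⊢
  have : (0:ℤ) < a := by exact_mod_cast h0
  exact_mod_cast this

lemma cf_det (hθ : Irrational θ) (n : ℕ) :
    cfA θ n * cfB θ (n+1) - cfB θ n * cfA θ (n+1) = (-1)^(n+1) := by
  have h := SimpContFract.determinant (s := SimpContFract.of θ) (n := n) ?_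
  · exact h
  · exact not_term hθ n

lemma B_mono (hθ : Irrational θ) {m n : ℕ} (h : m ≤ n) : cfB θ m ≤ cfB θ n := by
  induction n with
  | zero => simpa [Nat.le_zero.mp h] using le_refl _
  | succ k ih =>
      rcases Nat.lt_or_ge m (k+1) with h' | h'
      · exact (ih (by omega)).trans (of_den_mono (v := θ) (n := k))
      · have : m = k+1 := by omega
        simp [this]

lemma B_succ_lt (hθ : Irrational θ) (n : ℕ) : cfB θ (n+1) + 1 ≤ cfB θ (n+2) := by
  obtain ⟨b, hb1, hB, _⟩ := B_rec hθ n
  have h1 := B_one_le hθ n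
  have h2 := B_one_le hθ (n+1)
  rw [hB]; nlinarith

lemma B_ge (hθ : Irrational θ) (n : ℕ) : (n:ℝ) ≤ cfB θ (n+1) := by
  induction n with
  | zero => simp; linarith [B_one_le hθ 1]
  | succ k ih => push_cast; linarith [B_succ_lt hθ k]

lemma best (hθ : Irrational θ) (h1 : 1 < θ) (h2 : θ < 2) (k : ℕ) (a b : ℤ)
    (ha1 : (1:ℝ) ≤ (a:ℝ)) (ha2 : (a:ℝ) < cfB θ (k+1)) :
    cfD θ k ≤ |θ * a - b| ∧
      (((a:ℝ) = cfB θ k ∧ (b:ℝ) = cfA θ k) ∨ cfD θ k < |θ * a - b|) := by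
  obtain ⟨ak, bk, hak, hbk⟩ := AB_int hθ h1 h2 k
  obtain ⟨ak1, bk1, hak1, hbk1⟩ := AB_int hθ h1 h2 (k+1)
  have hdetR := cf_det hθ k
  rw [hak, hbk, hak1, hbk1] at hdetR
  have ha1' : (1:ℤ) ≤ a := by exact_mod_cast ha1
  have ha2' : a < bk1 := by rw [hbk1] at ha2; exact_mod_cast ha2
  have hbk_ge : (1:ℤ) ≤ bk := by
    have := B_one_le hθ k; rw [hbk] at this; exact_mod_cast this
  have hbk1_ge : (1:ℤ) ≤ bk1 := by
    have := B_one_le hθ (k+1); rw [hbk1] at this; exact_mod_cast this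
  -- decompose (a,b) in the basis ((bk,ak),(bk1,ak1))
  have key : ∃ x y : ℤ, a = x * bk + y * bk1 ∧ b = x * ak + y * ak1 := by
    rcases Nat.even_or_odd (k+1) with he | ho
    · have hdet : (ak * bk1 - bk * ak1 : ℤ) = 1 := by
        have : ((-1:ℝ))^(k+1) = 1 := he.neg_one_pow
        rw [this] at hdetR; exact_mod_cast hdetR
      exact ⟨-(a*ak1 - b*bk1), -(b*bk - a*ak),
        by linear_combination (-a : ℤ) * hdet, by linear_combination (-b : ℤ) * hdet⟩
    · have hdet : (ak * bk1 - bk * ak1 : ℤ) = -1 := by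
        have : ((-1:ℝ))^(k+1) = -1 := ho.neg_one_pow
        rw [this] at hdetR; exact_mod_cast hdetR
      exact ⟨(a*ak1 - b*bk1), (b*bk - a*ak),
        by linear_combination (a : ℤ) * hdet, by linear_combination (b : ℤ) * hdet⟩
  obtain ⟨x, y, hx, hy⟩ := key
  have hxR : (a:ℝ) = (x:ℝ) * cfB θ k + (y:ℝ) * cfB θ (k+1) := by
    rw [hbk, hbk1]; exact_mod_cast congrArg (Int.cast : ℤ → ℝ) hx
  have hyR : (b:ℝ) = (x:ℝ) * cfA θ k + (y:ℝ) * cfA θ (k+1) := by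
    rw [hak, hak1]; exact_mod_cast congrArg (Int.cast : ℤ → ℝ) hy
  obtain ⟨hEk, hDk, _⟩ := eps_spec hθ k
  obtain ⟨hEk1, hDk1, _⟩ := eps_spec hθ (k+1)
  set r := cfD θ k
  set r' := cfD θ (k+1)
  have hcomb : θ * a - b = (-1)^k * ((x:ℝ) * r - (y:ℝ) * r') := by
    have e1 : θ * cfB θ k - cfA θ k = (-1)^k * r := hEk
    have e2 : θ * cfB θ (k+1) - cfA θ (k+1) = (-1)^(k+1) * r' := hEk1
    have : θ * (a:ℝ) - b = (x:ℝ) * (θ * cfB θ k - cfA θ k)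
        + (y:ℝ) * (θ * cfB θ (k+1) - cfA θ (k+1)) := by
      linear_combination θ * hxR - hyR
    rw [this, e1, e2, pow_succ]; ring
  have habs : |θ * a - b| = |(x:ℝ) * r - (y:ℝ) * r'| := by
    rw [hcomb, abs_mul, abs_pow, abs_neg, abs_one, one_pow, one_mul]
  rcases eq_or_ne y 0 with hy0 | hy0
  · subst hy0
    have hx1 : 1 ≤ x := by
      rcases lt_or_ge x 1 with hxs | hxs
      · exfalso
        have e1 : x * bk ≤ 0 * bk :=
          mul_le_mul_of_nonneg_right (by omega) (by omega)
        omega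
      · exact hxs
    have hxR1 : (1:ℝ) ≤ (x:ℝ) := by exact_mod_cast hx1
    have habs2 : |θ * a - b| = (x:ℝ) * r := by
      rw [habs]; push_cast
      rw [zero_mul, sub_zero, abs_mul, abs_of_pos hDk,
        abs_of_pos (by linarith : (0:ℝ) < (x:ℝ))]
    constructor
    · rw [habs2]; nlinarith
    · rcases eq_or_lt_of_le hx1 with hx1' | hx1'
      · left
        constructor
        · rw [hxR, ← hx1']; push_cast; ring
        · rw [hyR, ← hx1']; push_cast; ring
      · right; rw [habs2]
        have : (2:ℝ) ≤ (x:ℝ) := by exact_mod_cast hx1'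
        nlinarith
  · -- y ≠ 0 : then x and y have opposite signs
    have hbk0 : (0:ℤ) ≤ bk := by linarith
    have hbk10 : (0:ℤ) ≤ bk1 := by linarith
    have hxy : (0 < x ∧ y < 0) ∨ (x < 0 ∧ 0 < y) := by
      rcases lt_trichotomy x 0 with hxs | hxs | hxs
      · rcases lt_trichotomy y 0 with hys | hys | hys
        · exfalso
          have e1 : x * bk ≤ (-1) * bk :=
            mul_le_mul_of_nonneg_right (by omega) hbk0
          have e2 : y * bk1 ≤ (-1) * bk1 :=
            mul_le_mul_of_nonneg_right (by omega) hbk10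
          omega
        · exact absurd hys hy0
        · exact Or.inr ⟨hxs, hys⟩
      · exfalso
        subst hxs
        rcases lt_trichotomy y 0 with hys | hys | hys
        · have e2 : y * bk1 ≤ (-1) * bk1 :=
            mul_le_mul_of_nonneg_right (by omega) hbk10
          omega
        · exact hy0 hys
        · have e2 : 1 * bk1 ≤ y * bk1 :=
            mul_le_mul_of_nonneg_right (by omega) hbk10
          omega
      · rcases lt_trichotomy y 0 with hys | hys | hys
        · exact Or.inl ⟨hxs, hys⟩
        · exact absurd hys hy0
        · exfalso
          have e1 : 1 * bk ≤ x * bk :=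
            mul_le_mul_of_nonneg_right (by omega) hbk0
          have e2 : 1 * bk1 ≤ y * bk1 :=
            mul_le_mul_of_nonneg_right (by omega) hbk10
          omega
    have hsum : r + r' ≤ |θ * a - b| := by
      rw [habs]
      rcases hxy with ⟨hxp, hyn⟩ | ⟨hxn, hyp⟩
      · have h1' : (1:ℝ) ≤ (x:ℝ) := by exact_mod_cast hxp
        have h2' : (y:ℝ) ≤ -1 := by
          have : y ≤ -1 := by omega
          exact_mod_cast this
        refine le_trans ?_ (le_abs_self _)
        nlinarith
      · have h1' : (x:ℝ) ≤ -1 := by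
          have : x ≤ -1 := by omega
          exact_mod_cast this
        have h2' : (1:ℝ) ≤ (y:ℝ) := by exact_mod_cast hyp
        refine le_trans ?_ (neg_le_abs _)
        nlinarith
    exact ⟨by linarith, Or.inr (by linarith)⟩

lemma Z_eq (n : ℕ) : cfZ θ n = (1+θ^2) * cfB θ n - θ * cfE θ n := by
  rw [cfZ, cfE]; ring

lemma Z_bounds (hθ : Irrational θ) (h1 : 1 < θ) (n : ℕ) :
    (1+θ^2) * cfB θ n - θ ≤ cfZ θ n ∧ cfZ θ n ≤ (1+θ^2) * cfB θ n + θ := by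
  have hD := D_lt_one hθ n
  have hE : |cfE θ n| < 1 := hD
  rw [abs_lt] at hE
  rw [Z_eq]
  constructor <;> nlinarith [hE.1, hE.2]

lemma Z_pos (hθ : Irrational θ) (h1 : 1 < θ) (n : ℕ) : 0 < cfZ θ n := by
  have := (Z_bounds hθ h1 n).1
  nlinarith [B_one_le hθ n]

lemma Z_succ_lt (hθ : Irrational θ) (h1 : 1 < θ) (h2 : θ < 2) (n : ℕ) :
    cfZ θ n < cfZ θ (n+1) := by
  obtain ⟨hEn, hDn, _⟩ := eps_spec hθ n
  obtain ⟨hEn1, hDn1, _⟩ := eps_spec hθ (n+1)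
  have hmB : cfB θ n ≤ cfB θ (n+1) := B_mono hθ (Nat.le_succ n)
  have hDn' := D_lt_one hθ n
  have hDn1' := D_lt_one hθ (n+1)
  rw [Z_eq, Z_eq, hEn, hEn1]
  rcases Nat.even_or_odd n with he | ho
  · rw [he.neg_one_pow, (by simpa using he.add_one : Odd (n+1)).neg_one_pow]
    nlinarith
  · -- n odd hence n ≥ 1 and B grows by ≥ 1
    obtain ⟨m, rfl⟩ : ∃ m, n = m + 1 := ⟨n - 1, by rcases ho with ⟨t, ht⟩; omega⟩
    have hB1 : cfB θ (m+1) + 1 ≤ cfB θ (m+2) := B_succ_lt hθ m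
    rw [ho.neg_one_pow, (by simpa using ho.add_one : Even (m+1+1)).neg_one_pow]
    nlinarith

lemma Z_mono (hθ : Irrational θ) (h1 : 1 < θ) (h2 : θ < 2) {m n : ℕ} (h : m < n) :
    cfZ θ m < cfZ θ n := by
  induction n with
  | zero => omega
  | succ k ih =>
      rcases Nat.lt_or_ge m k with h' | h'
      · exact (ih h').trans (Z_succ_lt hθ h1 h2 k)
      · have : m = k := by omega
        rw [this]; exact Z_succ_lt hθ h1 h2 k

lemma Z_unbounded (hθ : Irrational θ) (h1 : 1 < θ) (h2 : θ < 2) (x : ℝ) :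
    ∃ n, x < cfZ θ (n+1) := by
  obtain ⟨n, hn⟩ := exists_nat_gt ((x + 2) / 2)
  refine ⟨n, ?_⟩
  have hB := B_ge hθ n
  have := (Z_bounds hθ h1 (n+1)).1
  have hB1 := B_one_le hθ (n+1)
  have h2B : 2 * cfB θ (n+1) ≤ (1+θ^2) * cfB θ (n+1) := by
    nlinarith [mul_nonneg (by nlinarith : (0:ℝ) ≤ θ^2 - 1) (by linarith : (0:ℝ) ≤ cfB θ (n+1))]
  linarith

lemma rot_mem {z : ℝ × ℝ} (hz : z ∈ latticeOf θ) : (z.2, -z.1) ∈ latticeOf θ := by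
  obtain ⟨q, p, rfl⟩ := hz
  exact ⟨p, -q, by push_cast; apply Prod.ext <;> simp <;> ring⟩

lemma rot3_mem {z : ℝ × ℝ} (hz : z ∈ latticeOf θ) : (-z.2, z.1) ∈ latticeOf θ := by
  obtain ⟨q, p, rfl⟩ := hz
  exact ⟨-p, q, by push_cast; apply Prod.ext <;> simp <;> ring⟩

lemma neg_mem {z : ℝ × ℝ} (hz : z ∈ latticeOf θ) : -z ∈ latticeOf θ := by
  obtain ⟨q, p, rfl⟩ := hz
  exact ⟨-q, -p, by push_cast; apply Prod.ext <;> simp <;> ring⟩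

lemma latNorm_rot (z : ℝ × ℝ) : latNorm (z.2, -z.1) = latNorm z := by
  simp [latNorm, max_comm]

lemma latProd_rot (z : ℝ × ℝ) : latProd (z.2, -z.1) = latProd z := by
  simp [latProd, mul_comm]

lemma latNorm_neg (z : ℝ × ℝ) : latNorm (-z) = latNorm z := by
  simp [latNorm]

lemma latProd_neg (z : ℝ × ℝ) : latProd (-z) = latProd z := by
  simp [latProd]

lemma relmin_neg {z : ℝ × ℝ} (h : IsRelativeMin (latticeOf θ) z) :
    IsRelativeMin (latticeOf θ) (-z) := by
  obtain ⟨hm, h0, hc⟩ := h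
  refine ⟨neg_mem hm, neg_ne_zero.mpr h0, fun ⟨w, hw, hw0, hw1, hw2, hw3⟩ => ?_⟩
  exact hc ⟨w, hw, hw0, by simpa using hw1, by simpa using hw2, by
    simpa using hw3⟩

lemma relmin_rot {z : ℝ × ℝ} (h : IsRelativeMin (latticeOf θ) z) :
    IsRelativeMin (latticeOf θ) (z.2, -z.1) := by
  obtain ⟨hm, h0, hc⟩ := h
  refine ⟨rot_mem hm, ?_, fun ⟨w, hw, hw0, hw1, hw2, hw3⟩ => ?_⟩
  · simp only [ne_eq, Prod.ext_iff, Prod.fst_zero, Prod.snd_zero, not_and, neg_eq_zero]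
    intro h2
    intro h1
    apply h0
    exact Prod.ext h1 h2
  · refine hc ⟨(-w.2, w.1), rot3_mem hw, ?_, ?_, ?_, ?_⟩
    · simp only [ne_eq, Prod.ext_iff, Prod.fst_zero, Prod.snd_zero, not_and, neg_eq_zero]
      intro h2 h1
      exact hw0 (Prod.ext h1 h2)
    · simpa using hw2
    · simpa using hw1
    · simp only [abs_neg] at hw3 ⊢
      simpa [add_comm] using hw3

lemma hyp_transfer {z z' : ℝ × ℝ} (hz : z ∈ latticeOf θ) (h0 : z ≠ 0)
    (hn : latNorm z = latNorm z') (hp : latProd z = latProd z')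
    (h : IsHyperbolicMin (latticeOf θ) z') : IsHyperbolicMin (latticeOf θ) z := by
  obtain ⟨_, _, hc⟩ := h
  exact ⟨hz, h0, fun ⟨w, hw, hw0, hw1, hw2⟩ =>
    hc ⟨w, hw, hw0, hn ▸ hw1, hp ▸ hw2⟩⟩

lemma coord_ne (hθ : Irrational θ) (c d : ℤ) (h : ¬(c = 0 ∧ d = 0)) :
    θ * c - d ≠ 0 ∧ (c:ℝ) + θ * d ≠ 0 := by
  constructor
  · intro he
    have hc : c ≠ 0 := by
      rintro rfl
      have : (d:ℝ) = 0 := by push_cast at he; linarith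
      exact h ⟨rfl, by exact_mod_cast this⟩
    have hcR : (c:ℝ) ≠ 0 := Int.cast_ne_zero.mpr hc
    exact hθ ⟨(d : ℚ) / (c : ℚ), by
      push_cast
      field_simp
      linarith [he]⟩
  · intro he
    have hd : d ≠ 0 := by
      rintro rfl
      have : (c:ℝ) = 0 := by push_cast at he; linarith
      exact h ⟨by exact_mod_cast this, rfl⟩
    have hdR : (d:ℝ) ≠ 0 := Int.cast_ne_zero.mpr hd
    exact hθ ⟨-(c : ℚ) / (d : ℚ), by
      push_cast
      field_simp
      linarith [he]⟩

noncomputable def cfU (θ : ℝ) (n : ℕ) : ℝ := cfB θ n * cfD θ n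

lemma U_pos (hθ : Irrational θ) (n : ℕ) : 0 < cfU θ n ∧ cfU θ n < 1 := by
  obtain ⟨_, hD, hu⟩ := eps_spec hθ n
  have hB := B_one_le hθ n
  exact ⟨by rw [cfU]; positivity, hu⟩

lemma U_anti (hθ : Irrational θ) {K0 : ℕ}
    (hK0 : ∀ k, K0 ≤ k → 3 * cfU θ (k+1) < cfU θ k) :
    ∀ m n, K0 ≤ m → m ≤ n → cfU θ n ≤ cfU θ m := by
  intro m n hm hmn
  induction n with
  | zero => simp_all
  | succ i ih =>
      rcases Nat.lt_or_ge m (i+1) with h' | h'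
      · have h3 := hK0 i (by omega)
        have := ih (by omega)
        have hU := (U_pos hθ (i+1)).1
        linarith
      · have : m = i+1 := by omega
        simp [this]

lemma U_chain (hθ : Irrational θ) {K0 : ℕ}
    (hK0 : ∀ k, K0 ≤ k → 3 * cfU θ (k+1) < cfU θ k)
    {j k : ℕ} (hj : K0 ≤ j) (hjk : j < k) : 3 * cfU θ k ≤ cfU θ j := by
  have h1 := hK0 j hj
  have h2 := U_anti hθ hK0 (j+1) k (by omega) (by omega)
  linarith

lemma U_small (hθ : Irrational θ) {K0 : ℕ}
    (hK0 : ∀ k, K0 ≤ k → 3 * cfU θ (k+1) < cfU θ k)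
    {δ : ℝ} (hδ : 0 < δ) : ∃ K, ∀ k, K ≤ k → cfU θ k ≤ δ := by
  obtain ⟨m, hm⟩ := exists_pow_lt_of_lt_one hδ (by norm_num : (1:ℝ)/3 < 1)
  have hstep : ∀ i : ℕ, cfU θ (K0 + i) ≤ ((1:ℝ)/3)^i := by
    intro i
    induction i with
    | zero => simpa using le_of_lt (U_pos hθ K0).2
    | succ i ih =>
        have h3 := hK0 (K0 + i) (by omega)
        have : cfU θ (K0 + i + 1) ≤ cfU θ (K0 + i) / 3 := by linarith
        calc cfU θ (K0 + (i+1)) = cfU θ (K0 + i + 1) := by ring_nf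
          _ ≤ cfU θ (K0 + i) / 3 := this
          _ ≤ ((1:ℝ)/3)^i / 3 := by linarith
          _ = ((1:ℝ)/3)^(i+1) := by rw [pow_succ]; ring
  refine ⟨K0 + m, fun k hk => ?_⟩
  calc cfU θ k ≤ cfU θ (K0 + m) := U_anti hθ hK0 _ _ (by omega) hk
    _ ≤ ((1:ℝ)/3)^m := hstep m
    _ ≤ δ := le_of_lt hm

set_option maxHeartbeats 2000000 in
lemma core (hθ : Irrational θ) (h1 : 1 < θ) (h2 : θ < 2) {K0 : ℕ}
    (hK0 : ∀ k, K0 ≤ k → 3 * cfU θ (k+1) < cfU θ k)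
    {c0 : ℝ} (hc0 : ∀ j, j < K0 + 4 → c0 ≤ cfU θ j)
    {K : ℕ} (hK : K0 + 5 ≤ K)
    (hKs : ∀ k, K ≤ k → cfU θ k ≤ 1/100 ∧ cfU θ k ≤ c0/7)
    (k : ℕ) (hkK : K ≤ k) (c d : ℤ) (h2pos : 0 < (c:ℝ) + θ*d)
    (hle : |θ*c - d| ≤ (c:ℝ) + θ*d) (hZ : (c:ℝ) + θ*d ≤ cfZ θ k) :
    cfD θ k * cfZ θ k ≤ |θ*c - d| * ((c:ℝ) + θ*d) := by
  set w1 : ℝ := θ*c - d with hw1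
  set w2 : ℝ := (c:ℝ) + θ*d with hw2def
  obtain ⟨huk1, huk2⟩ := hKs k hkK
  have hBk := B_one_le hθ k
  have hDk0 := (eps_spec hθ k).2.1
  have hDuk : cfD θ k ≤ cfU θ k := by
    rw [cfU]; nlinarith
  have hZb := (Z_bounds hθ h1 k).2
  have hDZ : cfD θ k * cfZ θ k ≤ 7 * cfU θ k := by
    have h5 : (1+θ^2) ≤ 5 := by nlinarith
    have : cfZ θ k ≤ 7 * cfB θ k := by nlinarith
    calc cfD θ k * cfZ θ k ≤ cfD θ k * (7 * cfB θ k) :=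
          mul_le_mul_of_nonneg_left this (le_of_lt hDk0)
      _ = 7 * cfU θ k := by rw [cfU]; ring
  rcases le_or_gt 1 |w1| with hc1 | hc1
  · -- both coordinates at least 1
    have : (1:ℝ) ≤ |w1| * w2 := by nlinarith [abs_nonneg w1]
    linarith
  · -- |w1| < 1
    have habs := abs_lt.mp hc1
    have hcpos : (1:ℤ) ≤ c := by
      rcases lt_trichotomy c 0 with hc | hc | hc
      · exfalso
        have hcR : (c:ℝ) ≤ -1 := by
          have : c ≤ -1 := by omega
          exact_mod_cast this
        have hdR : (d:ℝ) < 1 - θ := by nlinarith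
        have hd1 : (d:ℝ) ≤ -1 := by
          have hd0 : (d:ℝ) < 0 := by nlinarith
          have : d < 0 := by exact_mod_cast hd0
          have : d ≤ -1 := by omega
          exact_mod_cast this
        nlinarith
      · exfalso
        subst hc
        have hd0 : d ≠ 0 := by
          rintro rfl; simp [hw2def] at h2pos
        have : (1:ℝ) ≤ |(d:ℝ)| := by
          exact_mod_cast Int.one_le_abs (by exact_mod_cast hd0)
        rw [hw1] at hc1
        push_cast at hc1
        simp only [Int.cast_zero, mul_zero, zero_sub, abs_neg] at hc1
        linarith
      · exact hc
    have hcR1 : (1:ℝ) ≤ (c:ℝ) := by exact_mod_cast hcpos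
    have hkey : (1+θ^2) * c = w2 + θ * w1 := by rw [hw1, hw2def]; ring
    -- c ≤ B k
    obtain ⟨ak, bk, hak, hbk⟩ := AB_int hθ h1 h2 k
    have hcBk : (c:ℝ) ≤ cfB θ k := by
      have hlt : (c:ℝ) < cfB θ k + 1 := by nlinarith
      rw [hbk] at hlt ⊢
      have : c < bk + 1 := by exact_mod_cast hlt
      exact_mod_cast (by omega : c ≤ bk)
    -- find the index j with B j ≤ c < B (j+1)
    have hk1 : 1 ≤ k := by omega
    obtain ⟨k', rfl⟩ : ∃ m, k = m + 1 := ⟨k - 1, by omega⟩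
    have hPk : (c:ℝ) < cfB θ (k'+1+1) := by
      have := B_succ_lt hθ k'
      linarith
    classical
    obtain ⟨j, hj1, hjk, hj2⟩ :
        ∃ j, (c:ℝ) < cfB θ (j+1) ∧ j ≤ k'+1 ∧ cfB θ j ≤ (c:ℝ) := by
      have hex : ∃ m, (c:ℝ) < cfB θ (m+1) := ⟨k'+1, hPk⟩
      refine ⟨Nat.find hex, Nat.find_spec hex, Nat.find_le hPk, ?_⟩
      rcases Nat.eq_zero_or_pos (Nat.find hex) with h0 | hpos
      · rw [h0, B_zero]; exact hcR1
      · obtain ⟨i, hi⟩ : ∃ i, Nat.find hex = i + 1 := ⟨Nat.find hex - 1, by omega⟩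
        have hmin := Nat.find_min hex (show i < Nat.find hex by omega)
        rw [hi]; linarith [not_lt.mp hmin]
    have hbest := (best hθ h1 h2 j c d hcR1 hj1).1
    have hw2ge : (1+θ^2) * cfB θ j - θ ≤ w2 := by
      have hBjc : (1+θ^2) * cfB θ j ≤ (1+θ^2) * c :=
        mul_le_mul_of_nonneg_left hj2 (by positivity)
      have hth : θ * w1 ≤ θ := by nlinarith [habs.2]
      linarith
    have hw2pos1 : (1:ℝ) ≤ w2 := by
      have hBj1 := B_one_le hθ j
      nlinarith
    have hDj0 := (eps_spec hθ j).2.1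
    have hprodge : cfD θ j * ((1+θ^2) * cfB θ j - θ) ≤ |w1| * w2 := by
      have hBj1 := B_one_le hθ j
      have h0 : (0:ℝ) ≤ (1+θ^2) * cfB θ j - θ := by nlinarith
      exact mul_le_mul hbest hw2ge h0 (abs_nonneg _)
    rcases Nat.lt_or_ge j (K0+4) with hjsmall | hjbig
    · -- small j : product at least c0
      have hc0j := hc0 j hjsmall
      have hBj1 := B_one_le hθ j
      have key2 : 0 ≤ cfD θ j * (θ^2 * cfB θ j - θ) :=
        mul_nonneg hDj0.le (by nlinarith)
      have huj : cfU θ j ≤ cfD θ j * ((1+θ^2) * cfB θ j - θ) := by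
        rw [cfU]
        nlinarith [key2]
      linarith
    · rcases Nat.lt_or_ge j (k'+1) with hjlt | hjge
      · -- middle range : chain estimate
        have hchain := U_chain hθ hK0 (by omega : K0 ≤ j) hjlt
        have hBj3 : (3:ℝ) ≤ cfB θ j := by
          obtain ⟨i, hi⟩ : ∃ i, j = i + 1 := ⟨j - 1, by omega⟩
          have := B_ge hθ i
          rw [hi]
          have : ((j:ℝ) - 1) ≤ cfB θ j := by
            rw [hi]; push_cast; simpa using B_ge hθ i
          have hj4 : (4:ℝ) ≤ (j:ℝ) := by exact_mod_cast (by omega : (4:ℕ) ≤ j)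
          rw [← hi]; linarith
        have hlhs : ((1:ℝ)/3 + θ^2) * cfU θ j ≤ cfD θ j * ((1+θ^2) * cfB θ j - θ) := by
          rw [cfU]
          nlinarith
        have hrhs : cfD θ (k'+1) * cfZ θ (k'+1) ≤ (3+θ^2) * cfU θ (k'+1) := by
          rw [cfU]
          nlinarith
        have huk0 := (U_pos hθ (k'+1)).1
        have e1 : (1/3+θ^2) * (3*cfU θ (k'+1)) ≤ (1/3+θ^2) * cfU θ j :=
          mul_le_mul_of_nonneg_left hchain (by positivity)
        have e2 : 0 ≤ (2*θ^2 - 2) * cfU θ (k'+1) :=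
          mul_nonneg (by nlinarith) huk0.le
        nlinarith [e1, e2, hrhs, hlhs, hprodge]
      · -- j = k
        have hjeq : j = k'+1 := by omega
        subst hjeq
        have hceq : (c:ℝ) = cfB θ (k'+1) := le_antisymm hcBk hj2
        rcases eq_or_ne (d:ℝ) (cfA θ (k'+1)) with hdeq | hdne
        · -- w is exactly the k-th minimum point
          have : |w1| = cfD θ (k'+1) := by rw [hw1, hceq, hdeq, cfD, cfE]
          have hw2Z : w2 = cfZ θ (k'+1) := by rw [hw2def, hceq, hdeq, cfZ]
          rw [this, hw2Z]
        · -- same denominator, different numerator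
          have hEk := (eps_spec hθ (k'+1)).1
          have htri : 1 - cfD θ (k'+1) ≤ |w1| := by
            have h1' : |(d:ℝ) - cfA θ (k'+1)| ≥ 1 := by
              rw [hak]
              have : d ≠ ak := by rintro rfl; exact hdne hak.symm
              have := Int.one_le_abs (sub_ne_zero.mpr this)
              calc (1:ℝ) ≤ |((d - ak : ℤ) : ℝ)| := by exact_mod_cast this
                _ = |(d:ℝ) - (ak:ℝ)| := by push_cast; ring_nf
            have h2' : |θ * cfB θ (k'+1) - cfA θ (k'+1)| = cfD θ (k'+1) := rfl
            have h3' : |w1| ≥ |(d:ℝ) - cfA θ (k'+1)| - |θ * cfB θ (k'+1) - cfA θ (k'+1)| := by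
              rw [hw1, hceq]
              have := abs_sub_abs_le_abs_sub ((d:ℝ) - cfA θ (k'+1)) (θ * cfB θ (k'+1) - cfA θ (k'+1))
              calc |(d:ℝ) - cfA θ (k'+1)| - |θ * cfB θ (k'+1) - cfA θ (k'+1)|
                  ≤ |(d:ℝ) - cfA θ (k'+1) - (θ * cfB θ (k'+1) - cfA θ (k'+1))| := abs_sub_abs_le_abs_sub _ _
                _ = |θ * cfB θ (k'+1) - d| := by rw [← abs_neg]; ring_nf
              
            linarith [h3', h1', h2' ▸ le_refl (cfD θ (k'+1))]
          have hDj_small : cfD θ (k'+1) ≤ 1/100 := le_trans hDuk huk1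
          nlinarith

lemma norm2_ne (hθ : Irrational θ) {z : ℝ × ℝ} (hz : z ∈ latticeOf θ) (h0 : z ≠ 0) :
    z.1 ≠ 0 ∧ z.2 ≠ 0 := by
  obtain ⟨c, d, rfl⟩ := hz
  have hcd : ¬(c = 0 ∧ d = 0) := by
    rintro ⟨rfl, rfl⟩
    simp at h0
  have := coord_ne hθ c d hcd
  exact this

lemma canon (hθ : Irrational θ) {z : ℝ × ℝ} (hz : z ∈ latticeOf θ) (h0 : z ≠ 0) :
    ∃ w, w ∈ latticeOf θ ∧ w ≠ 0 ∧ latNorm w = latNorm z ∧ latProd w = latProd z ∧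
      0 < w.2 ∧ |w.1| ≤ w.2 ∧
      (IsRelativeMin (latticeOf θ) z → IsRelativeMin (latticeOf θ) w) := by
  obtain ⟨hz1, hz2⟩ := norm2_ne hθ hz h0
  rcases le_or_gt |z.1| |z.2| with hle | hlt
  · rcases lt_or_gt_of_ne hz2 with hneg | hpos
    · refine ⟨-z, neg_mem hz, neg_ne_zero.mpr h0, latNorm_neg z, latProd_neg z, ?_, ?_,
        fun h => relmin_neg h⟩
      · simpa using hneg
      · simp only [Prod.fst_neg, Prod.snd_neg, abs_neg]
        rw [← abs_of_neg hneg]; exact hle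
    · exact ⟨z, hz, h0, rfl, rfl, hpos, by rw [← abs_of_pos hpos]; exact hle, fun h => h⟩
  · -- rotate
    have hrotmem := rot_mem hz
    have hrot0 : (z.2, -z.1) ≠ (0 : ℝ × ℝ) := by
      simp only [ne_eq, Prod.ext_iff, Prod.fst_zero, Prod.snd_zero, not_and, neg_eq_zero]
      intro _
      exact fun h => hz1 h
    rcases lt_or_gt_of_ne (neg_ne_zero.mpr hz1) with hneg | hpos
    · refine ⟨-(z.2, -z.1), neg_mem hrotmem, neg_ne_zero.mpr hrot0, ?_, ?_, ?_, ?_, ?_⟩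
      · rw [latNorm_neg, latNorm_rot]
      · rw [latProd_neg, latProd_rot]
      · simpa using hneg
      · simp only [Prod.fst_neg, Prod.snd_neg, abs_neg, neg_neg]
        calc |z.2| ≤ |z.1| := le_of_lt hlt
          _ = |(-z.1)| := (abs_neg z.1).symm
          _ = -(-z.1) := abs_of_neg hneg
          _ = z.1 := neg_neg z.1
      · intro h
        exact relmin_neg (relmin_rot h)
    · refine ⟨(z.2, -z.1), hrotmem, hrot0, latNorm_rot z, latProd_rot z, hpos, ?_,
        fun h => relmin_rot h⟩
      calc |(z.2, -z.1).1| = |z.2| := rfl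
        _ ≤ |z.1| := le_of_lt hlt
        _ = |(-z.1)| := (abs_neg z.1).symm
        _ = -z.1 := abs_of_pos hpos


lemma cpos (h1 : 1 < θ) (c d : ℤ) (h2pos : 0 < (c:ℝ) + θ*d)
    (hc1 : |θ*c - d| < 1) : (1:ℝ) ≤ (c:ℝ) := by
  have habs := abs_lt.mp hc1
  have : (1:ℤ) ≤ c := by
    rcases lt_trichotomy c 0 with hc | hc | hc
    · exfalso
      have hcR : (c:ℝ) ≤ -1 := by
        have : c ≤ -1 := by omega
        exact_mod_cast this
      have hdR : (d:ℝ) < 1 - θ := by nlinarith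
      have hd1 : (d:ℝ) ≤ -1 := by
        have hd0 : (d:ℝ) < 0 := by nlinarith
        have : d < 0 := by exact_mod_cast hd0
        have : d ≤ -1 := by omega
        exact_mod_cast this
      nlinarith
    · exfalso
      subst hc
      have hd0 : d ≠ 0 := by
        rintro rfl; simp at h2pos
      have : (1:ℝ) ≤ |(d:ℝ)| := by
        exact_mod_cast Int.one_le_abs (by exact_mod_cast hd0)
      push_cast at hc1
      simp only [mul_zero, zero_sub, abs_neg] at hc1
      linarith
    · exact hc
  exact_mod_cast this


set_option maxHeartbeats 2000000 in
/-- Let `θ` be irrational with `1 < θ < 2` whose convergents `p_k/q_k` satisfy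
`q_k·|q_kθ − p_k| > 3·q_{k+1}·|q_{k+1}θ − p_{k+1}|` for all sufficiently large `k`.
Then every relative minimum `z` of `Λ_θ` with `|z|` sufficiently large is also a
hyperbolic minimum of `Λ_θ`. -/
theorem relative_min_is_hyperbolic_min (θ : ℝ) (hθ : Irrational θ)
    (h1 : 1 < θ) (h2 : θ < 2)
    (p : ℕ → ℝ) (q : ℕ → ℝ)
    (hp : p = (GenContFract.of θ).nums) (hq : q = (GenContFract.of θ).dens)
    (hcf : ∀ᶠ k : ℕ in atTop,
      q k * |q k * θ - p k| > 3 * (q (k + 1) * |q (k + 1) * θ - p (k + 1)|)) :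
    ∃ T : ℝ, ∀ z : ℝ × ℝ, IsRelativeMin (latticeOf θ) z → T ≤ latNorm z →
      IsHyperbolicMin (latticeOf θ) z := by
  classical
  subst hp hq
  have hcf' : ∀ᶠ k : ℕ in atTop, 3 * cfU θ (k+1) < cfU θ k := by
    filter_upwards [hcf] with k hk
    have e1 : ∀ m, (GenContFract.of θ).dens m * |(GenContFract.of θ).dens m * θ -
        (GenContFract.of θ).nums m| = cfU θ m := by
      intro m
      have : (GenContFract.of θ).dens m * θ - (GenContFract.of θ).nums m
          = cfE θ m := by rw [cfE, cfB, cfA]; ring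
      rw [this, cfU, cfD, cfB]
    rw [e1, e1] at hk
    linarith
  obtain ⟨K0, hK0⟩ := eventually_atTop.mp hcf'
  have hK0' : ∀ k, K0 ≤ k → 3 * cfU θ (k+1) < cfU θ k := fun k hk => hK0 k hk
  -- positive lower bound on the first few cfU values
  obtain ⟨c0, hc0pos, hc0⟩ : ∃ c0 : ℝ, 0 < c0 ∧ ∀ j, j < K0 + 4 → c0 ≤ cfU θ j := by
    have hne : (Finset.range (K0+4)).Nonempty := ⟨0, by simp⟩
    refine ⟨((Finset.range (K0+4)).image (cfU θ)).min' (hne.image _), ?_, ?_⟩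
    · obtain ⟨j, hj, hjeq⟩ := Finset.mem_image.mp
        (Finset.min'_mem ((Finset.range (K0+4)).image (cfU θ)) (hne.image _))
      rw [← hjeq]; exact (U_pos hθ j).1
    · intro j hj
      exact Finset.min'_le _ _ (Finset.mem_image_of_mem _ (Finset.mem_range.mpr hj))
  obtain ⟨K1, hK1⟩ := U_small hθ hK0' (show (0:ℝ) < min (1/100) (c0/7) by positivity)
  set K := max K1 (K0+5) with hKdef
  have hKs : ∀ k, K ≤ k → cfU θ k ≤ 1/100 ∧ cfU θ k ≤ c0/7 := by
    intro k hk
    have := hK1 k (le_trans (le_max_left _ _) hk)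
    exact ⟨this.trans (min_le_left _ _), this.trans (min_le_right _ _)⟩
  have hKK0 : K0 + 5 ≤ K := le_max_right _ _
  refine ⟨cfZ θ K + 1, ?_⟩
  intro z hrel hT
  obtain ⟨hzΛ, hz0, hzc⟩ := hrel
  obtain ⟨w, hwΛ, hw0, hwn, hwp, hw2pos, hwle, hwrel⟩ := canon hθ hzΛ hz0
  refine hyp_transfer hzΛ hz0 hwn.symm hwp.symm ?_
  have hrelw := hwrel ⟨hzΛ, hz0, hzc⟩
  obtain ⟨_, _, hwc⟩ := hrelw
  have hwnorm : latNorm w = w.2 := by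
    rw [latNorm, abs_of_pos hw2pos, max_eq_right hwle]
  have hTw : cfZ θ K + 1 ≤ w.2 := by rw [← hwnorm, hwn]; exact hT
  -- find the index k with Z k ≤ w.2 < Z (k+1)
  obtain ⟨k, hklt, hkle⟩ : ∃ k, w.2 < cfZ θ (k+1) ∧ cfZ θ k ≤ w.2 := by
    have hex : ∃ n, w.2 < cfZ θ (n+1) := Z_unbounded hθ h1 h2 w.2
    refine ⟨Nat.find hex, Nat.find_spec hex, ?_⟩
    rcases Nat.eq_zero_or_pos (Nat.find hex) with h0 | hpos
    · rw [h0]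
      have : cfZ θ 0 ≤ cfZ θ K := le_of_lt (Z_mono hθ h1 h2 (by omega))
      linarith
    · obtain ⟨i, hi⟩ : ∃ i, Nat.find hex = i + 1 := ⟨Nat.find hex - 1, by omega⟩
      have hmin := Nat.find_min hex (show i < Nat.find hex by omega)
      rw [hi]; linarith [not_lt.mp hmin]
  have hkK : K ≤ k := by
    by_contra hcon
    have : cfZ θ (k+1) ≤ cfZ θ K := by
      rcases Nat.lt_or_ge (k+1) K with h' | h'
      · exact le_of_lt (Z_mono hθ h1 h2 h')
      · have : k + 1 = K := by omega
        rw [this]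
    linarith
  obtain ⟨cz, dz, hw⟩ := hwΛ
  have hw1 : w.1 = θ * cz - dz := by rw [hw]
  have hw2 : w.2 = (cz:ℝ) + θ * dz := by rw [hw]
  obtain ⟨ak, bk, hak, hbk⟩ := AB_int hθ h1 h2 k
  obtain ⟨ak1, bk1, hak1, hbk1⟩ := AB_int hθ h1 h2 (k+1)
  have hDk0 := (eps_spec hθ k).2.1
  have hDkuk : cfD θ k ≤ cfU θ k := by
    have := B_one_le hθ k
    rw [cfU]; nlinarith
  have huk := hKs k hkK
  have huk1 := hKs (k+1) (by omega)
  have hDk1uk : cfD θ (k+1) ≤ cfU θ (k+1) := by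
    have := B_one_le hθ (k+1)
    have := (eps_spec hθ (k+1)).2.1
    rw [cfU]; nlinarith
  have hDlt1 := D_lt_one hθ k
  -- step 1 : w must be the k-th convergent point
  have hwid : |w.1| = cfD θ k ∧ w.2 = cfZ θ k := by
    rcases lt_or_ge |w.1| (cfD θ k) with hA | hB
    · -- impossible : too good an approximation
      exfalso
      have hc1 : |θ*cz - dz| < 1 := by rw [← hw1]; linarith
      have hcR1 : (1:ℝ) ≤ (cz:ℝ) := cpos h1 cz dz (by rw [← hw2]; exact hw2pos) hc1
      have hkey : (1+θ^2) * cz = w.2 + θ * w.1 := by rw [hw1, hw2]; ring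
      have hZb1 := (Z_bounds hθ h1 (k+1)).2
      have habs := abs_lt.mp hc1
      have hclt : (cz:ℝ) < cfB θ (k+1) + 1 := by nlinarith [habs.2, hw1 ▸ habs.2]
      have hcle : (cz:ℝ) ≤ cfB θ (k+1) := by
        rw [hbk1] at hclt ⊢
        have : cz < bk1 + 1 := by exact_mod_cast hclt
        exact_mod_cast (by omega : cz ≤ bk1)
      rcases eq_or_lt_of_le hcle with hceq | hclt2
      · -- c = B (k+1)
        rcases eq_or_ne (dz:ℝ) (cfA θ (k+1)) with hdeq | hdne
        · have : w.2 = cfZ θ (k+1) := by rw [hw2, hceq, hdeq, cfZ]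
          linarith
        · have htri : 1 - cfD θ (k+1) ≤ |θ*cz - dz| := by
            have h1' : (1:ℝ) ≤ |(dz:ℝ) - cfA θ (k+1)| := by
              rw [hak1]
              have : dz ≠ ak1 := by rintro rfl; exact hdne hak1.symm
              have := Int.one_le_abs (sub_ne_zero.mpr this)
              calc (1:ℝ) ≤ |((dz - ak1 : ℤ) : ℝ)| := by exact_mod_cast this
                _ = |(dz:ℝ) - (ak1:ℝ)| := by push_cast; ring_nf
            have h3' : |(dz:ℝ) - cfA θ (k+1)| - cfD θ (k+1) ≤ |θ*cz - dz| := by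
              have step : |(dz:ℝ) - cfA θ (k+1)| - |θ * cfB θ (k+1) - cfA θ (k+1)|
                  ≤ |(dz:ℝ) - cfA θ (k+1) - (θ * cfB θ (k+1) - cfA θ (k+1))| :=
                abs_sub_abs_le_abs_sub _ _
              have e : |(dz:ℝ) - cfA θ (k+1) - (θ * cfB θ (k+1) - cfA θ (k+1))|
                  = |θ*cz - dz| := by rw [hceq, ← abs_neg]; ring_nf
              have : |θ * cfB θ (k+1) - cfA θ (k+1)| = cfD θ (k+1) := rfl
              linarith [step, e ▸ step]
            linarith
          have : cfD θ (k+1) ≤ 1/100 := le_trans hDk1uk huk1.1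
          have : cfD θ k ≤ 1/100 := le_trans hDkuk huk.1
          rw [← hw1] at htri
          linarith
      · -- c < B(k+1) : contradiction with best approximation property
        have := (best hθ h1 h2 k cz dz hcR1 hclt2).1
        rw [← hw1] at this
        linarith
    · -- relative minimality forces equality
      have hmem : ((θ * (bk:ℝ) - ak, (bk:ℝ) + θ * ak) : ℝ × ℝ) ∈ latticeOf θ :=
        ⟨bk, ak, rfl⟩
      have hE : θ * (bk:ℝ) - ak = cfE θ k := by rw [cfE, hak, hbk]
      have hZc : (bk:ℝ) + θ * ak = cfZ θ k := by rw [cfZ, hak, hbk]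
      have hZkpos := Z_pos hθ h1 k
      have hnc := hwc
      have habs2 : |w.2| = w.2 := abs_of_pos hw2pos
      have hfst : |θ * (bk:ℝ) - ak| = cfD θ k := by rw [hE, cfD]
      have hforce : ¬(cfD θ k ≤ |w.1| ∧ cfZ θ k ≤ |w.2| ∧
          cfD θ k + cfZ θ k < |w.1| + |w.2|) := by
        intro ⟨hh1, hh2, hh3⟩
        refine hnc ⟨(θ * (bk:ℝ) - ak, (bk:ℝ) + θ * ak), hmem, ?_, ?_, ?_, ?_⟩
        · simp only [ne_eq, Prod.ext_iff, Prod.fst_zero, Prod.snd_zero, not_and]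
          intro _
          rw [hZc]
          linarith
        · show |θ * (bk:ℝ) - ak| ≤ |w.1|
          rw [hfst]; exact hh1
        · show |(bk:ℝ) + θ * ak| ≤ |w.2|
          rw [hZc, abs_of_pos hZkpos]; exact hh2
        · show |θ * (bk:ℝ) - ak| + |(bk:ℝ) + θ * ak| < |w.1| + |w.2|
          rw [hfst, hZc, abs_of_pos hZkpos]; exact hh3
      rw [habs2] at hforce
      push_neg at hforce
      have hsum := hforce hB (by linarith)
      have hD : |w.1| = cfD θ k := by linarith
      have hZ : w.2 = cfZ θ k := by linarith
      exact ⟨hD, hZ⟩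
  obtain ⟨hwD, hwZ⟩ := hwid
  -- step 2 : w is a hyperbolic minimum
  refine ⟨⟨cz, dz, hw⟩, hw0, ?_⟩
  rintro ⟨v, hvΛ, hv0, hvn, hvp⟩
  obtain ⟨v', hv'Λ, hv'0, hv'n, hv'p, hv'pos, hv'le, _⟩ := canon hθ hvΛ hv0
  obtain ⟨e, f, hv'⟩ := hv'Λ
  have hv'1 : v'.1 = θ * e - f := by rw [hv']
  have hv'2 : v'.2 = (e:ℝ) + θ * f := by rw [hv']
  have hv'norm : latNorm v' = v'.2 := by
    rw [latNorm, abs_of_pos hv'pos, max_eq_right hv'le]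
  have hvZ : v'.2 ≤ cfZ θ k := by
    rw [← hv'norm, hv'n]
    rw [hwnorm, hwZ] at hvn
    exact hvn
  -- products
  have hprod : |v'.1| * v'.2 < cfD θ k * cfZ θ k := by
    by_contra hcon
    push_neg at hcon
    have h1' : latProd w ≤ latProd v := by
      rw [← hv'p, latProd, latProd, hwD, abs_of_pos hw2pos, hwZ, abs_of_pos hv'pos]
      exact Real.rpow_le_rpow (mul_nonneg hDk0.le (Z_pos hθ h1 k).le) hcon (by norm_num)
    linarith
  have hcore := core hθ h1 h2 hK0' hc0 hKK0 hKs k hkK e f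
    (by rw [← hv'2]; exact hv'pos)
    (by rw [← hv'1, ← hv'2]; exact hv'le)
    (by rw [← hv'2]; exact hvZ)
  rw [← hv'1, ← hv'2] at hcore
  linarith [hcore, hprod]
end

section
/- Let θ > 1 be irrational and let (z_k)_{k∈ℕ} be the sequence of successive hyperbolic minima of the lattice Λ_θ. Then for every k ≥ 2 one has |z_{k+1}| > (4/3)·φ^{k−2}·Π(z_k)^{−2}, where φ = (1 + √5)/2. -/
open Filter

private lemma shm_mem_sub {θ : ℝ} {a b : ℝ × ℝ} (ha : a ∈ latticeOf θ) (hb : b ∈ latticeOf θ) :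
    a - b ∈ latticeOf θ := by
  obtain ⟨q, p, rfl⟩ := ha
  obtain ⟨q', p', rfl⟩ := hb
  refine ⟨q - q', p - p', ?_⟩
  simp only [Prod.mk_sub_mk, Prod.mk.injEq]
  push_cast
  constructor <;> ring

private lemma shm_mem_neg {θ : ℝ} {a : ℝ × ℝ} (ha : a ∈ latticeOf θ) :
    -a ∈ latticeOf θ := by
  obtain ⟨q, p, rfl⟩ := ha
  refine ⟨-q, -p, ?_⟩
  simp only [Prod.neg_mk, Prod.mk.injEq]
  push_cast
  constructor <;> ring

private lemma shm_mem_rot {θ : ℝ} {a : ℝ × ℝ} (ha : a ∈ latticeOf θ) :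
    (a.2, -a.1) ∈ latticeOf θ := by
  obtain ⟨q, p, rfl⟩ := ha
  refine ⟨p, -q, ?_⟩
  simp only [Prod.mk.injEq]
  push_cast
  constructor <;> ring

private lemma shm_ne_zero {θ : ℝ} (hθ : Irrational θ) {a : ℝ × ℝ}
    (ha : a ∈ latticeOf θ) (h0 : a ≠ 0) : a.1 ≠ 0 ∧ a.2 ≠ 0 := by
  obtain ⟨q, p, rfl⟩ := ha
  constructor
  · intro h
    simp only at h
    by_cases hq : q = 0
    · subst hq
      simp only [Int.cast_zero, mul_zero, zero_sub, neg_eq_zero, Int.cast_eq_zero] at h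
      subst h
      exact h0 (by simp [Prod.ext_iff])
    · have hqR : (q : ℝ) ≠ 0 := Int.cast_ne_zero.mpr hq
      refine hθ ⟨(p : ℚ) / (q : ℚ), ?_⟩
      push_cast
      rw [div_eq_iff hqR]
      linarith [h]
  · intro h
    simp only at h
    by_cases hp : p = 0
    · subst hp
      simp only [Int.cast_zero, mul_zero, add_zero, Int.cast_eq_zero] at h
      subst h
      exact h0 (by simp [Prod.ext_iff])
    · have hpR : (p : ℝ) ≠ 0 := Int.cast_ne_zero.mpr hp
      refine hθ ⟨(-q : ℚ) / (p : ℚ), ?_⟩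
      push_cast
      rw [div_eq_iff hpR]
      linarith [h]

private lemma shm_norm_gt_one {θ : ℝ} (hθ1 : 1 < θ) {a : ℝ × ℝ}
    (ha : a ∈ latticeOf θ) (h0 : a ≠ 0) : 1 < latNorm a := by
  obtain ⟨q, p, rfl⟩ := ha
  have hqp : ¬(q = 0 ∧ p = 0) := by
    rintro ⟨rfl, rfl⟩
    exact h0 (by simp [Prod.ext_iff])
  have h1 : (1 : ℤ) ≤ q ^ 2 + p ^ 2 := by
    rcases not_and_or.mp hqp with h | h
    · have := Int.one_le_abs h
      nlinarith [sq_nonneg p, sq_abs q]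
    · have := Int.one_le_abs h
      nlinarith [sq_nonneg q, sq_abs p]
  have h1R : (1 : ℝ) ≤ (q : ℝ) ^ 2 + (p : ℝ) ^ 2 := by exact_mod_cast h1
  set x : ℝ := θ * (q : ℝ) - (p : ℝ) with hx
  set y : ℝ := (q : ℝ) + θ * (p : ℝ) with hy
  have key : x ^ 2 + y ^ 2 = (θ ^ 2 + 1) * ((q : ℝ) ^ 2 + (p : ℝ) ^ 2) := by
    rw [hx, hy]; ring
  have hM1 : |x| ≤ latNorm (x, y) := le_max_left _ _
  have hM2 : |y| ≤ latNorm (x, y) := le_max_right _ _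
  have hM0 : 0 ≤ latNorm (x, y) := le_trans (abs_nonneg x) hM1
  nlinarith [sq_abs x, sq_abs y, abs_nonneg x, abs_nonneg y]

private lemma shm_det {θ : ℝ} {a b : ℝ × ℝ} (ha : a ∈ latticeOf θ) (hb : b ∈ latticeOf θ) :
    ∃ m : ℤ, a.1 * b.2 - a.2 * b.1 = (θ ^ 2 + 1) * (m : ℝ) := by
  obtain ⟨q, p, rfl⟩ := ha
  obtain ⟨q', p', rfl⟩ := hb
  refine ⟨q * p' - p * q', ?_⟩
  push_cast
  ring

private lemma shm_latProd_sq (a : ℝ × ℝ) : latProd a ^ 2 = |a.1| * |a.2| := by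
  unfold latProd
  rw [← Real.rpow_natCast ((|a.1| * |a.2|) ^ ((1 : ℝ) / 2)) 2,
    ← Real.rpow_mul (by positivity)]
  norm_num

private lemma shm_latProd_lt {c b : ℝ × ℝ} (h : |c.1| * |c.2| < latProd b ^ 2) :
    latProd c < latProd b := by
  have hb : 0 ≤ latProd b := Real.rpow_nonneg (by positivity) _
  have h2 : latProd c ^ 2 < latProd b ^ 2 := by rw [shm_latProd_sq]; exact h
  exact lt_of_pow_lt_pow_left₀ 2 hb h2

private lemma shm_abs_sub_lt (u v : ℝ) (huv : 0 < u * v) : |u - v| < max |u| |v| := by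
  rcases mul_pos_iff.mp huv with ⟨hu, hv⟩ | ⟨hu, hv⟩
  · rw [abs_of_pos hu, abs_of_pos hv, abs_sub_lt_iff]
    constructor
    · linarith [le_max_left u v]
    · linarith [le_max_right u v]
  · rw [abs_of_neg hu, abs_of_neg hv, abs_sub_lt_iff]
    constructor
    · linarith [le_max_right (-u) (-v)]
    · linarith [le_max_left (-u) (-v)]

private lemma shm_rep (θ : ℝ) (hθ : Irrational θ)
    (z : ℕ → ℝ × ℝ)
    (hmin : ∀ k, IsHyperbolicMin (latticeOf θ) (z k)) :
    ∀ k, ∃ v : ℝ × ℝ, v ∈ latticeOf θ ∧ v.1 ≠ 0 ∧ |v.1| ≤ v.2 ∧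
      v.2 = latNorm (z k) ∧ |v.1| * v.2 = latProd (z k) ^ 2 := by
  intro k
  obtain ⟨hzΛ, hz0, -⟩ := hmin k
  obtain ⟨hx, hy⟩ := shm_ne_zero hθ hzΛ hz0
  rw [shm_latProd_sq]
  rcases le_total |(z k).1| |(z k).2| with hle | hle
  · have hN : latNorm (z k) = |(z k).2| := max_eq_right hle
    rcases le_or_gt 0 (z k).2 with hy0 | hy0
    · refine ⟨z k, hzΛ, hx, ?_, ?_, ?_⟩
      · rw [abs_of_nonneg hy0] at hle; exact hle
      · rw [hN, abs_of_nonneg hy0]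
      · rw [abs_of_nonneg hy0]
    · refine ⟨-(z k), shm_mem_neg hzΛ, by simpa using hx, ?_, ?_, ?_⟩
      · simp only [Prod.fst_neg, Prod.snd_neg, abs_neg]
        linarith [abs_of_neg hy0, hle]
      · simp only [Prod.snd_neg]
        rw [hN, abs_of_neg hy0]
      · simp only [Prod.fst_neg, Prod.snd_neg, abs_neg]
        rw [abs_of_neg hy0]
  · have hN : latNorm (z k) = |(z k).1| := max_eq_left hle
    rcases le_or_gt 0 (z k).1 with hx0 | hx0
    · refine ⟨-((z k).2, -(z k).1), shm_mem_neg (shm_mem_rot hzΛ), by simpa using hy, ?_, ?_, ?_⟩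
      · simp only [Prod.neg_mk, neg_neg, abs_neg]
        linarith [abs_of_nonneg hx0, hle]
      · simp only [Prod.neg_mk, neg_neg]
        rw [hN, abs_of_nonneg hx0]
      · simp only [Prod.neg_mk, neg_neg, abs_neg]
        rw [abs_of_nonneg hx0]; ring
    · refine ⟨((z k).2, -(z k).1), shm_mem_rot hzΛ, by simpa using hy, ?_, ?_, ?_⟩
      · simp only
        linarith [abs_of_neg hx0, hle]
      · simp only
        rw [hN, abs_of_neg hx0]
      · simp only
        rw [abs_of_neg hx0]; ring

/-- Let `θ > 1` be irrational and `(z_k)` the sequence of successive hyperbolic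
minima of `Λ_θ`. Then for all `k ≥ 2` one has
`|z_{k+1}| > (4/3)·φ^(k−2)·Π(z_k)^(−2)`, where `φ = (1 + √5)/2`. -/
theorem succ_hyperbolic_min_is_large (θ : ℝ) (hθ1 : 1 < θ) (hθ : Irrational θ)
    (z : ℕ → ℝ × ℝ)
    (hmin : ∀ k, IsHyperbolicMin (latticeOf θ) (z k))
    (hmono : StrictMono fun k => latNorm (z k))
    (hall : ∀ w : ℝ × ℝ, IsHyperbolicMin (latticeOf θ) w →
      ∃ k, latNorm w = latNorm (z k) ∧ latProd w = latProd (z k)) :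
    ∀ k : ℕ, 2 ≤ k →
      latNorm (z (k + 1)) >
        4 / 3 * ((1 + Real.sqrt 5) / 2) ^ (k - 2) * (latProd (z k)) ^ (-2 : ℤ) := by
  -- representatives
  choose w hwΛ hwx hwle hwN hwprod using shm_rep θ hθ z hmin
  -- basic facts
  have hN1 : ∀ j, 1 < latNorm (z j) := fun j =>
    shm_norm_gt_one hθ1 (hmin j).1 (hmin j).2.1
  have hNpos : ∀ j, 0 < latNorm (z j) := fun j => lt_trans one_pos (hN1 j)
  have hNmono : ∀ j, latNorm (z j) < latNorm (z (j + 1)) := fun j => by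
    simpa using hmono (Nat.lt_succ_self j)
  have hNoW : ∀ j, ∀ c, c ∈ latticeOf θ → c ≠ 0 → latNorm c ≤ latNorm (z j) →
      ¬ latProd c < latProd (z j) := by
    intro j c h1 h2 h3 h4
    exact (hmin j).2.2 ⟨c, h1, h2, h3, h4⟩
  have hPle : ∀ j, latProd (z (j + 1)) ≤ latProd (z j) := by
    intro j
    by_contra hcon
    push_neg at hcon
    exact (hmin (j + 1)).2.2 ⟨z j, (hmin j).1, (hmin j).2.1, (hNmono j).le, hcon⟩
  have hapos : ∀ j, 0 < |(w j).1| := fun j => abs_pos.mpr (hwx j)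
  have haN : ∀ j, |(w j).1| ≤ latNorm (z j) := fun j => (hwle j).trans_eq (hwN j)
  have hprod : ∀ j, |(w j).1| * latNorm (z j) = latProd (z j) ^ 2 := fun j => by
    rw [← hwN j]; exact hwprod j
  have hP2pos : ∀ j, 0 < latProd (z j) ^ 2 := fun j => by
    rw [← hprod j]; exact mul_pos (hapos j) (hNpos j)
  have hP2le : ∀ j, latProd (z (j + 1)) ^ 2 ≤ latProd (z j) ^ 2 := fun j =>
    pow_le_pow_left₀ (Real.rpow_nonneg (by positivity) _) (hPle j) 2
  have hamono : ∀ j, |(w (j + 1)).1| < |(w j).1| := by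
    intro j
    nlinarith [hprod j, hprod (j + 1), hP2le j, hNmono j, hapos (j + 1), hapos j,
      hNpos j, hNpos (j + 1)]
  -- pair lemma : same-sign consecutive small coordinates force doubling
  have hpair : ∀ j, 0 < (w j).1 * (w (j + 1)).1 →
      2 * latNorm (z j) < latNorm (z (j + 1)) := by
    intro j hs
    by_contra hcon
    push_neg at hcon
    set d := w (j + 1) - w j with hd
    have hdΛ : d ∈ latticeOf θ := shm_mem_sub (hwΛ (j + 1)) (hwΛ j)
    have hd2 : d.2 = latNorm (z (j + 1)) - latNorm (z j) := by
      rw [hd, Prod.snd_sub, hwN, hwN]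
    have hd2pos : 0 < d.2 := by rw [hd2]; linarith [hNmono j]
    have hd0 : d ≠ 0 := fun h => by rw [h] at hd2pos; simp at hd2pos
    have hd1 : |d.1| < |(w j).1| := by
      have h1 := shm_abs_sub_lt (w (j + 1)).1 (w j).1 (by linarith [mul_comm (w j).1 (w (j + 1)).1])
      have hmax : max |(w (j + 1)).1| |(w j).1| = |(w j).1| :=
        max_eq_right (hamono j).le
      rw [hd, Prod.fst_sub]
      rw [hmax] at h1
      exact h1
    have hd2le : |d.2| ≤ latNorm (z j) := by
      rw [abs_of_pos hd2pos, hd2]; linarith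
    have hnorm : latNorm d ≤ latNorm (z j) :=
      max_le (hd1.le.trans (haN j)) hd2le
    have hprodlt : |d.1| * |d.2| < latProd (z j) ^ 2 := by
      rw [← hprod j]
      calc |d.1| * |d.2| ≤ |d.1| * latNorm (z j) :=
            mul_le_mul_of_nonneg_left hd2le (abs_nonneg _)
        _ < |(w j).1| * latNorm (z j) := by
            exact mul_lt_mul_of_pos_right hd1 (hNpos j)
    exact hNoW j d hdΛ hd0 hnorm (shm_latProd_lt hprodlt)
  -- Fibonacci growth of norms
  have hfib : ∀ j, latNorm (z (j + 1)) + latNorm (z j) ≤ latNorm (z (j + 2)) := by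
    intro j
    by_contra hcon
    push_neg at hcon
    rcases lt_trichotomy ((w (j + 2)).1 * (w (j + 1)).1) 0 with hneg | hzero | hpos
    · rcases lt_trichotomy ((w (j + 1)).1 * (w j).1) 0 with hneg2 | hzero2 | hpos2
      · -- alternating twice : use g = w (j+2) - w (j+1) - w j
        set g := w (j + 2) - w (j + 1) - w j with hg
        have hgΛ : g ∈ latticeOf θ :=
          shm_mem_sub (shm_mem_sub (hwΛ (j + 2)) (hwΛ (j + 1))) (hwΛ j)
        have hg2 : g.2 = latNorm (z (j + 2)) - latNorm (z (j + 1)) - latNorm (z j) := by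
          rw [hg, Prod.snd_sub, Prod.snd_sub, hwN, hwN, hwN]
        have hg2neg : g.2 < 0 := by rw [hg2]; linarith
        have hg0 : g ≠ 0 := fun h => by rw [h] at hg2neg; simp at hg2neg
        have hg2abs : |g.2| < latNorm (z j) := by
          rw [abs_of_neg hg2neg, hg2]
          have := hNmono (j + 1)
          have h2 : latNorm (z (j + 1 + 1)) = latNorm (z (j + 2)) := by norm_num
          linarith [hNpos (j + 2), this, h2 ▸ this]
        -- the sum s = ξ_{j+1} + ξ_j
        have habs1 : |(w (j + 1)).1 + (w j).1| < |(w j).1| := by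
          have h1 := shm_abs_sub_lt (w j).1 (-(w (j + 1)).1) (by nlinarith)
          rw [sub_neg_eq_add, abs_neg] at h1
          rw [max_eq_left (hamono j).le] at h1
          rw [add_comm]
          exact h1
        have hsum_ne : 0 < ((w (j + 1)).1 + (w j).1) * (w j).1 := by
          have hprodeq : (w (j + 1)).1 * (w j).1 = -( |(w (j + 1)).1| * |(w j).1| ) := by
            rw [← abs_mul, abs_of_neg hneg2, neg_neg]
          nlinarith [sq_abs (w j).1, hamono j, hapos j, hapos (j + 1)]
        have hx20 : 0 < (w (j + 2)).1 * (w j).1 := by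
          by_contra hle0
          push_neg at hle0
          have hkey : ((w (j + 2)).1 * (w (j + 1)).1) * ((w (j + 1)).1 * (w j).1)
              = ((w (j + 2)).1 * (w j).1) * (w (j + 1)).1 ^ 2 := by ring
          nlinarith [mul_pos_of_neg_of_neg hneg hneg2, sq_nonneg (w (j + 1)).1]
        have hx2s : 0 < (w (j + 2)).1 * ((w (j + 1)).1 + (w j).1) := by
          by_contra hle0
          push_neg at hle0
          have hkey : ((w (j + 2)).1 * (w j).1) * (((w (j + 1)).1 + (w j).1) * (w j).1)
              = ((w (j + 2)).1 * ((w (j + 1)).1 + (w j).1)) * (w j).1 ^ 2 := by ring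
          nlinarith [mul_pos hx20 hsum_ne, sq_nonneg (w j).1]
        have hg1 : |g.1| < |(w j).1| := by
          have h1 := shm_abs_sub_lt (w (j + 2)).1 ((w (j + 1)).1 + (w j).1) hx2s
          have hg1e : g.1 = (w (j + 2)).1 - ((w (j + 1)).1 + (w j).1) := by
            rw [hg, Prod.fst_sub, Prod.fst_sub]; ring
          rw [hg1e]
          refine h1.trans_le (max_le ?_ habs1.le)
          exact ((hamono (j + 1)).trans (hamono j)).le
        have hnorm : latNorm g ≤ latNorm (z j) :=
          max_le (hg1.le.trans (haN j)) hg2abs.le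
        have hprodlt : |g.1| * |g.2| < latProd (z j) ^ 2 := by
          rw [← hprod j]
          calc |g.1| * |g.2| ≤ |g.1| * latNorm (z j) :=
                mul_le_mul_of_nonneg_left hg2abs.le (abs_nonneg _)
            _ < |(w j).1| * latNorm (z j) := mul_lt_mul_of_pos_right hg1 (hNpos j)
        exact hNoW j g hgΛ hg0 hnorm (shm_latProd_lt hprodlt)
      · exact (mul_ne_zero (hwx (j + 1)) (hwx j)) hzero2
      · -- previous pair same sign: N_{j+1} > 2 N_j, use h = w (j+2) - w (j+1)
        have hdb := hpair j (by rw [mul_comm]; exact hpos2)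
        set d := w (j + 2) - w (j + 1) with hd
        have hdΛ : d ∈ latticeOf θ := shm_mem_sub (hwΛ (j + 2)) (hwΛ (j + 1))
        have hd2 : d.2 = latNorm (z (j + 2)) - latNorm (z (j + 1)) := by
          rw [hd, Prod.snd_sub, hwN, hwN]
        have hd2pos : 0 < d.2 := by
          rw [hd2]
          have := hNmono (j + 1)
          norm_num at this
          linarith
        have hd0 : d ≠ 0 := fun h => by rw [h] at hd2pos; simp at hd2pos
        have hd2abs : |d.2| < latNorm (z j) := by
          rw [abs_of_pos hd2pos, hd2]; linarith
        have hd1 : |d.1| < |(w j).1| := by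
          have htri : |d.1| ≤ |(w (j + 2)).1| + |(w (j + 1)).1| := by
            rw [hd, Prod.fst_sub]
            exact abs_sub _ _
          have h2a : 2 * |(w (j + 1)).1| < |(w j).1| := by
            nlinarith [hprod j, hprod (j + 1), hP2le j, hapos (j + 1), hapos j,
              hNpos j, hNpos (j + 1), hdb]
          linarith [hamono (j + 1)]
        have hnorm : latNorm d ≤ latNorm (z j) :=
          max_le (hd1.le.trans (haN j)) hd2abs.le
        have hprodlt : |d.1| * |d.2| < latProd (z j) ^ 2 := by
          rw [← hprod j]
          calc |d.1| * |d.2| ≤ |d.1| * latNorm (z j) :=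
                mul_le_mul_of_nonneg_left hd2abs.le (abs_nonneg _)
            _ < |(w j).1| * latNorm (z j) := mul_lt_mul_of_pos_right hd1 (hNpos j)
        exact hNoW j d hdΛ hd0 hnorm (shm_latProd_lt hprodlt)
    · exact (mul_ne_zero (hwx (j + 2)) (hwx (j + 1))) hzero
    · have h3 : 0 < (w (j + 1)).1 * (w (j + 1 + 1)).1 := by
        have : j + 1 + 1 = j + 2 := rfl
        rw [this, mul_comm]; exact hpos
      have := hpair (j + 1) h3
      have h2 : latNorm (z (j + 1 + 1)) = latNorm (z (j + 2)) := rfl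
      rw [h2] at this
      linarith [hNmono j]
  -- determinant estimate : N_k < P_k^2 * N_{k+1}
  have hdet : ∀ k, latNorm (z k) < latProd (z k) ^ 2 * latNorm (z (k + 1)) := by
    intro k
    obtain ⟨m, hm⟩ := shm_det (hwΛ k) (hwΛ (k + 1))
    rw [hwN k, hwN (k + 1)] at hm
    have npos := hNpos k
    have n'pos := hNpos (k + 1)
    rcases eq_or_ne m 0 with rfl | hmne
    · -- proportional points are impossible
      exfalso
      simp only [Int.cast_zero, mul_zero] at hm
      have heq : (w k).1 * latNorm (z (k + 1)) = latNorm (z k) * (w (k + 1)).1 := by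
        linarith
      have habs : |(w k).1| * latNorm (z (k + 1)) = latNorm (z k) * |(w (k + 1)).1| := by
        have := congrArg abs heq
        rwa [abs_mul, abs_mul, abs_of_pos n'pos, abs_of_pos npos] at this
      nlinarith [hprod k, hprod (k + 1), hP2le k, hNmono k, hapos k, hapos (k + 1)]
    · have hm1 : (1 : ℝ) ≤ |(m : ℝ)| := by exact_mod_cast Int.one_le_abs hmne
      have hθpos : (0 : ℝ) < θ ^ 2 + 1 := by positivity
      have habs : 2 < |(w k).1 * latNorm (z (k + 1)) - latNorm (z k) * (w (k + 1)).1| := by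
        rw [hm, abs_mul, abs_of_pos hθpos]
        nlinarith
      have htri : |(w k).1 * latNorm (z (k + 1)) - latNorm (z k) * (w (k + 1)).1| ≤
          |(w k).1| * latNorm (z (k + 1)) + latNorm (z k) * |(w (k + 1)).1| := by
        calc |(w k).1 * latNorm (z (k + 1)) - latNorm (z k) * (w (k + 1)).1|
            ≤ |(w k).1 * latNorm (z (k + 1))| + |latNorm (z k) * (w (k + 1)).1| :=
              abs_sub _ _
          _ = |(w k).1| * latNorm (z (k + 1)) + latNorm (z k) * |(w (k + 1)).1| := by
              rw [abs_mul, abs_mul, abs_of_pos n'pos, abs_of_pos npos]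
      have h2 : 2 < |(w k).1| * latNorm (z (k + 1)) + latNorm (z k) * |(w (k + 1)).1| := by
        linarith
      -- multiply by N_k * N_{k+1}
      have e1 := hprod k
      have e2 := hprod (k + 1)
      have h6 := hP2le k
      have hNlt := hNmono k
      have hmul := mul_lt_mul_of_pos_right h2 (mul_pos npos n'pos)
      have hexp : (|(w k).1| * latNorm (z (k + 1)) + latNorm (z k) * |(w (k + 1)).1|) *
          (latNorm (z k) * latNorm (z (k + 1)))
          = (|(w k).1| * latNorm (z k)) * latNorm (z (k + 1)) ^ 2
            + (|(w (k + 1)).1| * latNorm (z (k + 1))) * latNorm (z k) ^ 2 := by ring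
      rw [hexp, e1, e2] at hmul
      have h8 : latNorm (z k) ^ 2 < latNorm (z (k + 1)) ^ 2 := by nlinarith
      have h9 : latProd (z (k + 1)) ^ 2 * latNorm (z k) ^ 2 ≤
          latProd (z k) ^ 2 * latNorm (z k) ^ 2 :=
        mul_le_mul_of_nonneg_right h6 (sq_nonneg _)
      have h10 : latProd (z k) ^ 2 * latNorm (z k) ^ 2 <
          latProd (z k) ^ 2 * latNorm (z (k + 1)) ^ 2 :=
        mul_lt_mul_of_pos_left h8 (hP2pos k)
      have hr : (latProd (z k) ^ 2 * latNorm (z (k + 1))) * latNorm (z (k + 1)) =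
          latProd (z k) ^ 2 * latNorm (z (k + 1)) ^ 2 := by ring
      have h12 : latNorm (z k) * latNorm (z (k + 1)) <
          (latProd (z k) ^ 2 * latNorm (z (k + 1))) * latNorm (z (k + 1)) := by
        rw [hr]; linarith
      exact lt_of_mul_lt_mul_right h12 n'pos.le
  -- Fibonacci growth gives the golden-ratio lower bound on norms
  have hφ2 : ((1 + Real.sqrt 5) / 2) ^ 2 = (1 + Real.sqrt 5) / 2 + 1 := by
    have h5 : Real.sqrt 5 ^ 2 = 5 := Real.sq_sqrt (by norm_num)
    linear_combination (1 / 4 : ℝ) * h5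
  have hs5 : Real.sqrt 5 ≤ 7 / 2 := by
    nlinarith [Real.sq_sqrt (show (0:ℝ) ≤ 5 by norm_num), Real.sqrt_nonneg 5]
  have hφpos : (0 : ℝ) < (1 + Real.sqrt 5) / 2 := by
    positivity
  have hgrow : ∀ m : ℕ, 4 / 3 * ((1 + Real.sqrt 5) / 2) ^ m ≤ latNorm (z (m + 2)) := by
    intro m
    induction m using Nat.twoStepInduction with
    | zero =>
      have := hfib 0
      have h1 := hN1 0
      have h2 := hN1 1
      norm_num
      linarith
    | one =>
      have hf1 := hfib 1
      have hf0 := hfib 0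
      have h1 := hN1 0
      have h2 := hN1 1
      have : 4 / 3 * ((1 + Real.sqrt 5) / 2) ^ 1 ≤ 3 := by
        rw [pow_one]
        linarith
      linarith
    | more n ih1 ih2 =>
      have hf := hfib (n + 2)
      have hkey : ((1 + Real.sqrt 5) / 2) ^ (n + 2) =
          ((1 + Real.sqrt 5) / 2) ^ (n + 1) + ((1 + Real.sqrt 5) / 2) ^ n := by
        rw [pow_succ, pow_succ]
        linear_combination (((1 + Real.sqrt 5) / 2) ^ n) * hφ2
      have e1 : n + 1 + 2 = n + 2 + 1 := by omega
      have e2 : n + 2 + 2 = n + 2 + 2 := rfl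
      rw [e1] at ih2
      rw [hkey]
      have : n + 2 + 1 + 1 = n + 2 + 2 := rfl
      rw [this] at hf
      linarith
  -- conclusion
  intro k hk
  obtain ⟨m, rfl⟩ : ∃ m, k = m + 2 := ⟨k - 2, by omega⟩
  have hsub : m + 2 - 2 = m := by omega
  rw [hsub]
  have hp := hP2pos (m + 2)
  have h1 := hdet (m + 2)
  have h2 := hgrow m
  have hz2 : latProd (z (m + 2)) ^ (-2 : ℤ) = (latProd (z (m + 2)) ^ 2)⁻¹ := by
    rw [zpow_neg]
    norm_num [zpow_ofNat]
  rw [gt_iff_lt, hz2, mul_inv_lt_iff₀ hp]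
  have e3 : m + 2 + 1 = m + 3 := rfl
  nlinarith
end

section
/- Let θ > 1 be irrational. Then ω̂̂(Λ_θ) ≤ 1/2 and ω̂̂(θ) ≤ 2. -/
open Filter

/-- The weak uniform Diophantine exponent of a real number `θ`:
the supremum (in `EReal`) of real `γ` such that for every sufficiently large `t`
there are integers `p`, `q` with `1 ≤ q ≤ t` and `q·|qθ − p| ≤ t^(1−γ)`. -/
noncomputable def weakUniformExp (θ : ℝ) : EReal :=
  sSup {g : EReal | ∃ γ : ℝ, g = (γ : EReal) ∧
    ∀ᶠ t : ℝ in atTop, ∃ p q : ℤ, 1 ≤ q ∧ (q : ℝ) ≤ t ∧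
      (q : ℝ) * |(q : ℝ) * θ - (p : ℝ)| ≤ t ^ (1 - γ)}

/-- round is the nearest integer. -/
lemma my_round_min (x : ℝ) (j : ℤ) : |x - round x| ≤ |x - j| := by
  rcases eq_or_ne j (round x) with h | h
  · rw [h]
  · have h0 : (j : ℝ) - round x ≠ 0 := by
      intro hc
      exact h (by exact_mod_cast sub_eq_zero.mp hc)
    have h1 : (1:ℝ) ≤ |(j:ℝ) - round x| := by
      have : (1:ℤ) ≤ |j - round x| := Int.one_le_abs (by
        intro hc; exact h (sub_eq_zero.mp hc))
      calc (1:ℝ) = ((1:ℤ):ℝ) := by norm_num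
        _ ≤ |((j - round x : ℤ) : ℝ)| := by exact_mod_cast this
        _ = |(j:ℝ) - round x| := by push_cast; ring_nf
    have h2 : |x - round x| ≤ 1/2 := abs_sub_round x
    have h3 : |(j:ℝ) - round x| ≤ |x - j| + |x - round x| := by
      have := abs_sub (x - round x) (x - j)
      calc |(j:ℝ) - round x| = |(x - round x) - (x - j)| := by ring_nf
        _ ≤ |x - round x| + |x - j| := abs_sub _ _
        _ = |x - j| + |x - round x| := by ring
    linarith

/-- Key lemma: for irrational θ, there exist arbitrarily large T with
`min_{1 ≤ q ≤ T} |qθ - p| > 1/(4T)`. -/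
lemma exists_good_T (θ : ℝ) (hθ : Irrational θ) (N : ℕ) :
    ∃ T : ℕ, N ≤ T ∧ 1 ≤ T ∧
      ∀ q p : ℤ, 1 ≤ q → (q:ℝ) ≤ (T:ℝ) → 1/(4*(T:ℝ)) < |(q:ℝ)*θ - (p:ℝ)| := by
  classical
  set Q := max N 1 with hQdef
  have hQ1 : 1 ≤ Q := le_max_right _ _
  set s : Finset ℕ := Finset.Icc 1 Q with hsdef
  have hs : s.Nonempty := ⟨1, by simp [hsdef, hQ1]⟩
  set g : ℕ → ℝ := fun n => |(n:ℝ)*θ - (round ((n:ℝ)*θ) : ℤ)| with hgdef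
  set δ : ℝ := s.inf' hs g with hδdef
  have hδpos : 0 < δ := by
    rw [hδdef, Finset.lt_inf'_iff]
    intro n hn
    have hn1 : 1 ≤ n := (Finset.mem_Icc.mp hn).1
    have hirr : Irrational ((n:ℝ)*θ) := hθ.natCast_mul (by omega)
    have := hirr.ne_int (round ((n:ℝ)*θ))
    simpa [hgdef, abs_pos, sub_ne_zero] using this
  have hδle : ∀ n ∈ s, δ ≤ g n := fun n hn => Finset.inf'_le g hn
  -- find some m ≥ 1 with ‖mθ‖ < δ
  obtain ⟨n₀, hn₀⟩ := exists_nat_one_div_lt hδpos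
  obtain ⟨j₀, k₀, hk₀pos, hk₀le, hk₀⟩ := Real.exists_int_int_abs_mul_sub_le θ (Nat.succ_pos n₀)
  have hPex : ∃ m : ℕ, 1 ≤ m ∧ ∃ j : ℤ, |(m:ℝ)*θ - (j:ℝ)| < δ := by
    refine ⟨k₀.toNat, by omega, j₀, ?_⟩
    have hcast : ((k₀.toNat : ℕ) : ℝ) = (k₀ : ℝ) := by
      exact_mod_cast Int.toNat_of_nonneg hk₀pos.le
    rw [hcast]
    calc |(k₀:ℝ)*θ - (j₀:ℝ)| ≤ 1 / (((n₀.succ : ℕ):ℝ) + 1) := by exact_mod_cast hk₀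
      _ ≤ 1 / ((n₀:ℝ) + 1) := by
          apply one_div_le_one_div_of_le (by positivity)
          push_cast; linarith
      _ < δ := hn₀
  set M := Nat.find hPex with hMdef
  obtain ⟨hM1, j, hj⟩ := Nat.find_spec hPex
  have hQM : Q < M := by
    by_contra hc
    push_neg at hc
    have hMs : M ∈ s := Finset.mem_Icc.mpr ⟨hM1, hc⟩
    have := hδle M hMs
    have hround : g M ≤ |(M:ℝ)*θ - (j:ℝ)| := my_round_min _ _
    linarith
  -- the achieving element and the lower bound δ > 1/(2M)
  obtain ⟨n, hns, hneq⟩ := Finset.exists_mem_eq_inf' hs g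
  have hn1 : 1 ≤ n := (Finset.mem_Icc.mp hns).1
  have hnQ : n ≤ Q := (Finset.mem_Icc.mp hns).2
  have hnM : n < M := lt_of_le_of_lt hnQ hQM
  set pn : ℤ := round ((n:ℝ)*θ) with hpndef
  have hδn : δ = |(n:ℝ)*θ - (pn:ℝ)| := hneq
  have hδM : 1 < 2 * (M:ℝ) * δ := by
    have hne : (M:ℤ) * pn - (n:ℤ) * j ≠ 0 := by
      intro hc
      have hcr : (M:ℝ) * (pn:ℝ) = (n:ℝ) * (j:ℝ) := by
        have : ((M:ℤ) * pn : ℤ) = ((n:ℤ) * j : ℤ) := by omega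
        exact_mod_cast this
      -- then M(nθ - pn) = n(Mθ - j)
      have hkey : (M:ℝ) * ((n:ℝ)*θ - pn) = (n:ℝ) * ((M:ℝ)*θ - j) := by ring_nf; linarith [hcr]
      have h1 : (M:ℝ) * δ = (n:ℝ) * |(M:ℝ)*θ - j| := by
        have h' := congrArg abs hkey
        rw [abs_mul, abs_mul, abs_of_nonneg (by positivity : (0:ℝ) ≤ (M:ℝ)),
          abs_of_nonneg (by positivity : (0:ℝ) ≤ (n:ℝ))] at h'
        rw [hδn]; exact h' 
      have hnM' : (n:ℝ) ≤ (M:ℝ) := by exact_mod_cast hnM.le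
      have hMpos : (0:ℝ) < M := by exact_mod_cast (by omega : 0 < M)
      nlinarith [abs_nonneg ((M:ℝ)*θ - (j:ℝ)), hj]
    set K : ℤ := (M:ℤ) * pn - (n:ℤ) * j with hK
    have h1le : (1:ℝ) ≤ |(K:ℝ)| := by exact_mod_cast Int.one_le_abs hne
    have hid : ((K:ℤ):ℝ) =
        (M:ℝ) * ((pn:ℝ) - (n:ℝ)*θ) + (n:ℝ) * ((M:ℝ)*θ - (j:ℝ)) := by
      rw [hK]; push_cast; ring
    have h2 : |((K:ℤ):ℝ)| ≤ (M:ℝ) * δ + (n:ℝ) * |(M:ℝ)*θ - j| := by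
      rw [hid]
      calc |(M:ℝ) * ((pn:ℝ) - (n:ℝ)*θ) + (n:ℝ) * ((M:ℝ)*θ - (j:ℝ))|
          ≤ |(M:ℝ) * ((pn:ℝ) - (n:ℝ)*θ)| + |(n:ℝ) * ((M:ℝ)*θ - (j:ℝ))| := abs_add_le _ _
        _ = (M:ℝ) * |(pn:ℝ) - (n:ℝ)*θ| + (n:ℝ) * |(M:ℝ)*θ - (j:ℝ)| := by
            rw [abs_mul, abs_mul, abs_of_nonneg (by positivity : (0:ℝ) ≤ (M:ℝ)),
              abs_of_nonneg (by positivity : (0:ℝ) ≤ (n:ℝ))]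
        _ = (M:ℝ) * δ + (n:ℝ) * |(M:ℝ)*θ - (j:ℝ)| := by rw [hδn, abs_sub_comm]
    have hnM' : (n:ℝ) ≤ (M:ℝ) := by exact_mod_cast hnM.le
    have hnpos : (0:ℝ) < n := by exact_mod_cast hn1
    nlinarith [hj, abs_nonneg ((M:ℝ)*θ - (j:ℝ))]
  refine ⟨M - 1, by omega, by omega, ?_⟩
  intro q p hq hqT
  have hqM : q.toNat < M := by
    have : (q:ℝ) ≤ ((M - 1 : ℕ):ℝ) := hqT
    have : q ≤ ((M-1:ℕ):ℤ) := by exact_mod_cast this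
    omega
  have hnotP : ¬(1 ≤ q.toNat ∧ ∃ j : ℤ, |(q.toNat:ℝ)*θ - (j:ℝ)| < δ) :=
    Nat.find_min hPex hqM
  push_neg at hnotP
  have hq1 : 1 ≤ q.toNat := by omega
  have hδq : δ ≤ |(q.toNat:ℝ)*θ - (p:ℝ)| := hnotP hq1 p
  have hcast : ((q.toNat : ℕ):ℝ) = (q:ℝ) := by exact_mod_cast Int.toNat_of_nonneg (by omega)
  rw [hcast] at hδq
  have hT1 : (1:ℝ) ≤ ((M-1:ℕ):ℝ) := by exact_mod_cast (by omega : 1 ≤ M - 1)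
  have hMT : (M:ℝ) = ((M-1:ℕ):ℝ) + 1 := by push_cast [Nat.cast_sub (by omega : 1 ≤ M)]; ring
  have : 1/(4*((M-1:ℕ):ℝ)) < δ := by
    rw [div_lt_iff₀ (by positivity)]
    rw [hMT] at hδM
    nlinarith
  linarith



/-- Lower bound for the product over the lattice, at a good time `T`, case `q ≥ 1`. -/
lemma lat_lower (θ : ℝ) (hθ1 : 1 < θ) (T : ℕ) (hT1 : 1 ≤ T)
    (hB : ∀ q p : ℤ, 1 ≤ q → (q:ℝ) ≤ (T:ℝ) → 1/(4*(T:ℝ)) < |(q:ℝ)*θ - (p:ℝ)|)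
    (q p : ℤ) (hq : 1 ≤ q)
    (hx : |θ*(q:ℝ) - (p:ℝ)| ≤ (T:ℝ)) (hy : |(q:ℝ) + θ*(p:ℝ)| ≤ (T:ℝ)) :
    1/(4*(T:ℝ)) < |θ*(q:ℝ) - (p:ℝ)| * |(q:ℝ) + θ*(p:ℝ)| := by
  have hθ0 : (0:ℝ) ≤ θ := by linarith
  have hθm1 : (0:ℝ) ≤ θ - 1 := by linarith
  have hTpos : (0:ℝ) < T := by exact_mod_cast (by omega : 0 < T)
  have hxabs := abs_le.mp hx
  have hyabs := abs_le.mp hy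
  have hq1 : (1:ℝ) ≤ (q:ℝ) := by exact_mod_cast hq
  have hxn := abs_nonneg (θ*(q:ℝ) - (p:ℝ))
  have hyn := abs_nonneg ((q:ℝ) + θ*(p:ℝ))
  have hxl := le_abs_self (θ*(q:ℝ) - (p:ℝ))
  have hH5 : (0:ℝ) ≤ θ*(T:ℝ)*(θ-1) := mul_nonneg (mul_nonneg hθ0 hTpos.le) hθm1
  have hqT : (q:ℝ) ≤ (T:ℝ) := by
    by_contra hc
    push_neg at hc
    linarith [hyabs.2,
      mul_le_mul_of_nonneg_left hxabs.2 hθ0,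
      mul_le_mul_of_nonneg_left hc.le (mul_nonneg hθ0 hθm1),
      mul_pos (sub_pos.mpr hc) (show (0:ℝ) < 1 + θ by linarith)]
  have hx4 : 1/(4*(T:ℝ)) < |θ*(q:ℝ) - (p:ℝ)| := by
    have h := hB q p hq hqT
    rwa [mul_comm (q:ℝ) θ] at h
  by_cases hxq : |θ*(q:ℝ) - (p:ℝ)| ≤ (q:ℝ)
  · have h2 : θ*|θ*(q:ℝ) - (p:ℝ)| ≤ θ*(q:ℝ) := mul_le_mul_of_nonneg_left hxq hθ0
    have h3 : θ*(θ*(q:ℝ) - (p:ℝ)) ≤ θ*|θ*(q:ℝ) - (p:ℝ)| := mul_le_mul_of_nonneg_left hxl hθ0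
    have hy1 : (1:ℝ) ≤ (q:ℝ) + θ*(p:ℝ) := by
      linarith [mul_nonneg (mul_nonneg hθ0 hθm1) (by linarith : (0:ℝ) ≤ (q:ℝ))]
    have hy1' : (1:ℝ) ≤ |(q:ℝ) + θ*(p:ℝ)| := le_trans hy1 (le_abs_self _)
    linarith [mul_le_mul_of_nonneg_left hy1' hxn]
  · push_neg at hxq
    have hx1 : (1:ℝ) ≤ |θ*(q:ℝ) - (p:ℝ)| := le_trans hq1 hxq.le
    rcases lt_trichotomy p 0 with hp | hp | hp
    · have hpq : 1 ≤ -p := by omega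
      have hpT : ((-p : ℤ):ℝ) ≤ (T:ℝ) := by
        push_cast
        by_contra hc
        push_neg at hc
        linarith [hxabs.2,
          mul_le_mul_of_nonneg_left (show -((q:ℝ) + θ*(p:ℝ)) ≤ (T:ℝ) by linarith [hyabs.1]) hθ0,
          mul_le_mul_of_nonneg_left hc.le (mul_nonneg hθ0 hθm1),
          mul_pos (sub_pos.mpr hc) (show (0:ℝ) < 1 + θ by linarith)]
      have h1 := hB (-p) q hpq hpT
      have e : |((-p : ℤ):ℝ)*θ - ((q : ℤ):ℝ)| = |(q:ℝ) + θ*(p:ℝ)| := by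
        push_cast
        rw [show -(p:ℝ)*θ - (q:ℝ) = -((q:ℝ) + θ*(p:ℝ)) by ring, abs_neg]
      rw [e] at h1
      linarith [mul_le_mul_of_nonneg_right hx1 hyn]
    · subst hp
      have e : |(q:ℝ) + θ*(((0:ℤ)):ℝ)| = (q:ℝ) := by
        push_cast
        rw [mul_zero, add_zero]
        exact abs_of_nonneg (by linarith)
      rw [e]
      calc 1/(4*(T:ℝ)) < |θ*(q:ℝ) - (((0:ℤ)):ℝ)| := hx4
        _ = |θ*(q:ℝ) - (((0:ℤ)):ℝ)| * 1 := by ring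
        _ ≤ |θ*(q:ℝ) - (((0:ℤ)):ℝ)| * (q:ℝ) := mul_le_mul_of_nonneg_left hq1 hxn
    · have hpq : 1 ≤ p := by omega
      have hppos : (0:ℝ) < (p:ℝ) := by exact_mod_cast hp
      have hpT : ((p : ℤ):ℝ) ≤ (T:ℝ) := by
        by_contra hc
        push_neg at hc
        linarith [hxabs.1,
          mul_le_mul_of_nonneg_left hyabs.2 hθ0,
          mul_le_mul_of_nonneg_left hc.le (mul_nonneg hθ0 hθm1),
          mul_pos (sub_pos.mpr hc) (show (0:ℝ) < 1 + θ by linarith)]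
      have h1 := hB p (-q) hpq hpT
      have e : |((p : ℤ):ℝ)*θ - ((-q : ℤ):ℝ)| = |(q:ℝ) + θ*(p:ℝ)| := by
        push_cast
        rw [show (p:ℝ)*θ - -(q:ℝ) = (q:ℝ) + θ*(p:ℝ) by ring]
      rw [e] at h1
      linarith [mul_le_mul_of_nonneg_right hx1 hyn]

/-- Lower bound for the product over the lattice, any nonzero `q`. -/
lemma lat_lower' (θ : ℝ) (hθ1 : 1 < θ) (T : ℕ) (hT1 : 1 ≤ T)
    (hB : ∀ q p : ℤ, 1 ≤ q → (q:ℝ) ≤ (T:ℝ) → 1/(4*(T:ℝ)) < |(q:ℝ)*θ - (p:ℝ)|)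
    (q p : ℤ) (hq : q ≠ 0)
    (hx : |θ*(q:ℝ) - (p:ℝ)| ≤ (T:ℝ)) (hy : |(q:ℝ) + θ*(p:ℝ)| ≤ (T:ℝ)) :
    1/(4*(T:ℝ)) < |θ*(q:ℝ) - (p:ℝ)| * |(q:ℝ) + θ*(p:ℝ)| := by
  rcases hq.lt_or_gt with h | h
  · have e1 : |θ*((-q:ℤ):ℝ) - ((-p:ℤ):ℝ)| = |θ*(q:ℝ) - (p:ℝ)| := by
      push_cast
      rw [show θ*(-(q:ℝ)) - (-(p:ℝ)) = -(θ*(q:ℝ) - (p:ℝ)) by ring, abs_neg]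
    have e2 : |((-q:ℤ):ℝ) + θ*((-p:ℤ):ℝ)| = |(q:ℝ) + θ*(p:ℝ)| := by
      push_cast
      rw [show -(q:ℝ) + θ*(-(p:ℝ)) = -((q:ℝ) + θ*(p:ℝ)) by ring, abs_neg]
    have h' := lat_lower θ hθ1 T hT1 hB (-q) (-p) (by omega)
      (by rw [e1]; exact hx) (by rw [e2]; exact hy)
    rwa [e1, e2] at h'
  · exact lat_lower θ hθ1 T hT1 hB q p (by omega) hx hy

/-- if `a + b = -1` then `T^a = 1/(T * T^b)`. -/
lemma rpow_helper (T : ℝ) (hT : 0 < T) (a b : ℝ) (hab : a + b = -1) :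
    T ^ a = 1 / (T * T ^ b) := by
  rw [eq_div_iff (by positivity)]
  calc T ^ a * (T * T ^ b) = (T ^ a * T ^ b) * T := by ring
    _ = T ^ (a + b) * T := by rw [← Real.rpow_add hT]
    _ = T ^ (-1 : ℝ) * T := by rw [hab]
    _ = 1 := by rw [Real.rpow_neg_one]; field_simp

/-- if `0 < e` and `4^(1/e) < T`, `1 ≤ T`, then `T ^ (-1-e) < 1/(4T)`. -/
lemma rpow_upper (T : ℝ) (hT : 1 ≤ T) (e : ℝ) (he : 0 < e)
    (hc : (4:ℝ) ^ ((1:ℝ)/e) < T) : T ^ (-1-e) < 1/(4*T) := by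
  have hTpos : (0:ℝ) < T := by linarith
  have ha4 : (4:ℝ) < T ^ e := by
    have h4 : (4:ℝ) = ((4:ℝ) ^ ((1:ℝ)/e)) ^ e := by
      rw [← Real.rpow_mul (by norm_num : (0:ℝ) ≤ 4), one_div,
        inv_mul_cancel₀ (ne_of_gt he), Real.rpow_one]
    rw [h4]
    exact Real.rpow_lt_rpow (by positivity) hc he
  have hexp : T ^ (-1-e) = 1/(T * T ^ e) := rpow_helper T hTpos _ _ (by ring)
  rw [hexp]
  have hae : (0:ℝ) < T ^ e := Real.rpow_pos_of_pos hTpos _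
  apply div_lt_div_of_pos_left one_pos (by positivity)
  nlinarith

/-- For irrational `θ > 1`, one has `ω̂̂(Λ_θ) ≤ 1/2` and `ω̂̂(θ) ≤ 2`. -/
theorem weakUniformExp_upper_bounds (θ : ℝ) (hθ1 : 1 < θ) (hθ : Irrational θ) :
    weakUniformExpLat (latticeOf θ) ≤ ((1 / 2 : ℝ) : EReal) ∧
    weakUniformExp θ ≤ 2 := by
  constructor
  · apply sSup_le
    rintro g ⟨γ, rfl, hev⟩
    rw [EReal.coe_le_coe_iff]
    by_contra hγ
    push_neg at hγ
    have hγ1 : 0 < 2*γ - 1 := by linarith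
    rw [eventually_atTop] at hev
    obtain ⟨t₀, ht₀⟩ := hev
    set c : ℝ := (4:ℝ) ^ ((1:ℝ)/(2*γ-1)) with hc
    obtain ⟨T, hNT, hT1, hB⟩ := exists_good_T θ hθ ⌈max t₀ (c+1)⌉₊
    have hTc : max t₀ (c+1) ≤ (T:ℝ) := le_trans (Nat.le_ceil _) (by exact_mod_cast hNT)
    have hTt₀ : t₀ ≤ (T:ℝ) := le_trans (le_max_left _ _) hTc
    have hTcc : c < (T:ℝ) := by
      have := le_trans (le_max_right _ _) hTc; linarith
    have hTpos : (0:ℝ) < T := by exact_mod_cast (by omega : 0 < T)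
    have hT1' : (1:ℝ) ≤ (T:ℝ) := by exact_mod_cast hT1
    obtain ⟨z, hzmem, hz0, hznorm, hzprod⟩ := ht₀ (T:ℝ) hTt₀
    obtain ⟨q, p, rfl⟩ := hzmem
    have hxy : max |θ*(q:ℝ) - (p:ℝ)| |(q:ℝ) + θ*(p:ℝ)| ≤ (T:ℝ) := hznorm
    have hx : |θ*(q:ℝ) - (p:ℝ)| ≤ (T:ℝ) := le_trans (le_max_left _ _) hxy
    have hy : |(q:ℝ) + θ*(p:ℝ)| ≤ (T:ℝ) := le_trans (le_max_right _ _) hxy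
    have hprod0 : (|θ*(q:ℝ) - (p:ℝ)| * |(q:ℝ) + θ*(p:ℝ)|) ^ ((1:ℝ)/2) ≤ (T:ℝ) ^ (-γ) :=
      hzprod
    have habs0 : (0:ℝ) ≤ |θ*(q:ℝ) - (p:ℝ)| * |(q:ℝ) + θ*(p:ℝ)| := by positivity
    have hprod2 : |θ*(q:ℝ) - (p:ℝ)| * |(q:ℝ) + θ*(p:ℝ)| ≤ (T:ℝ) ^ (-γ*2) := by
      have h := Real.rpow_le_rpow (Real.rpow_nonneg habs0 _) hprod0
        (by norm_num : (0:ℝ) ≤ 2)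
      rw [← Real.rpow_mul habs0, ← Real.rpow_mul (le_of_lt hTpos)] at h
      norm_num at h
      convert h using 2
      norm_num
    rcases eq_or_ne q 0 with rfl | hq0
    · rcases eq_or_ne p 0 with rfl | hp0
      · exact hz0 (by norm_num [Prod.ext_iff])
      · have hp1 : (1:ℝ) ≤ |(p:ℝ)| := by
          have : (1:ℤ) ≤ |p| := Int.one_le_abs hp0
          calc (1:ℝ) = ((1:ℤ):ℝ) := by norm_num
            _ ≤ ((|p|:ℤ):ℝ) := by exact_mod_cast this
            _ = |(p:ℝ)| := by push_cast; ring
        have he1 : |θ*((0:ℤ):ℝ) - (p:ℝ)| = |(p:ℝ)| := by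
          push_cast; rw [mul_zero, zero_sub, abs_neg]
        have he2 : |((0:ℤ):ℝ) + θ*(p:ℝ)| = θ * |(p:ℝ)| := by
          push_cast; rw [zero_add, abs_mul, abs_of_pos (by linarith : (0:ℝ) < θ)]
        rw [he1, he2] at hprod2
        have hle1 : (T:ℝ) ^ (-γ*2) ≤ 1 :=
          Real.rpow_le_one_of_one_le_of_nonpos hT1' (by nlinarith)
        have h1 : (1:ℝ) ≤ |(p:ℝ)| * |(p:ℝ)| := by nlinarith
        have h2 : θ * 1 ≤ θ * (|(p:ℝ)| * |(p:ℝ)|) :=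
          mul_le_mul_of_nonneg_left h1 (by linarith)
        nlinarith [h2, hprod2, hle1, hθ1]
    · have hlow := lat_lower' θ hθ1 T hT1 hB q p hq0 hx hy
      have hc1 : 1/(4*(T:ℝ)) < (T:ℝ) ^ (-γ*2) := lt_of_lt_of_le hlow hprod2
      have hup : (T:ℝ) ^ (-γ*2) < 1/(4*(T:ℝ)) := by
        have : (-γ*2 : ℝ) = -1-(2*γ-1) := by ring
        rw [this]
        exact rpow_upper (T:ℝ) hT1' (2*γ-1) hγ1 hTcc
      linarith
  · apply sSup_le
    rintro g ⟨γ, rfl, hev⟩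
    have hgoal : γ ≤ 2 := by
      by_contra hγ
      push_neg at hγ
      have hγ2 : 0 < γ - 2 := by linarith
      rw [eventually_atTop] at hev
      obtain ⟨t₀, ht₀⟩ := hev
      set c : ℝ := (4:ℝ) ^ ((1:ℝ)/(γ-2)) with hc
      obtain ⟨T, hNT, hT1, hB⟩ := exists_good_T θ hθ ⌈max t₀ (c+1)⌉₊
      have hTc : max t₀ (c+1) ≤ (T:ℝ) := le_trans (Nat.le_ceil _) (by exact_mod_cast hNT)
      have hTt₀ : t₀ ≤ (T:ℝ) := le_trans (le_max_left _ _) hTc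
      have hTcc : c < (T:ℝ) := by
        have := le_trans (le_max_right _ _) hTc; linarith
      have hTpos : (0:ℝ) < T := by exact_mod_cast (by omega : 0 < T)
      have hT1' : (1:ℝ) ≤ (T:ℝ) := by exact_mod_cast hT1
      obtain ⟨p, q, hq, hqT, hprod⟩ := ht₀ (T:ℝ) hTt₀
      have hq1 : (1:ℝ) ≤ (q:ℝ) := by exact_mod_cast hq
      have hB' := hB q p hq hqT
      have habs := abs_nonneg ((q:ℝ)*θ - (p:ℝ))
      have hlow : 1/(4*(T:ℝ)) < (q:ℝ) * |(q:ℝ)*θ - (p:ℝ)| := by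
        calc 1/(4*(T:ℝ)) < |(q:ℝ)*θ - (p:ℝ)| := hB'
          _ = 1 * |(q:ℝ)*θ - (p:ℝ)| := by ring
          _ ≤ (q:ℝ) * |(q:ℝ)*θ - (p:ℝ)| := mul_le_mul_of_nonneg_right hq1 habs
      have hc1 : 1/(4*(T:ℝ)) < (T:ℝ) ^ (1-γ) := lt_of_lt_of_le hlow hprod
      have hup : (T:ℝ) ^ (1-γ) < 1/(4*(T:ℝ)) := by
        have : (1-γ : ℝ) = -1-(γ-2) := by ring
        rw [this]
        exact rpow_upper (T:ℝ) hT1' (γ-2) hγ2 hTcc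
      linarith
    have h2 : ((2:ℝ):EReal) = (2:EReal) := by rfl
    rw [← h2, EReal.coe_le_coe_iff]
    exact hgoal
end
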